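/- arXiv:1705.09964 — 5 statements merged into one kernel-verified Lean document; each statement's English description precedes it below -/
import Mathlib

section
/- The Lobachevsky function Λ(x) = -∫₀^x log|2 sin t| dt is periodic with period π, i.e., Λ(x + π) = Λ(x) for all real x. -/
open Real MeasureTheory Set intervalIntegral

noncomputable def lob (x : ℝ) : ℝ := -∫ t in (0:ℝ)..x, Real.log |2 * Real.sin t|

noncomputable def lf (t : ℝ) : ℝ := Real.log |2 * Real.sin t|

lemma lf_periodic : Function.Periodic lf Real.pi := by
  intro t
  simp [lf, Real.sin_add_pi, mul_neg, abs_neg]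

lemma lf_pi_sub (x : ℝ) : lf (Real.pi - x) = lf x := by
  simp [lf, Real.sin_pi_sub]

lemma log_intInt_01 : IntervalIntegrable Real.log volume 0 1 := by
  have h : IntegrableOn (fun x : ℝ => -Real.log x) (Ioc (0:ℝ) 1) := by
    apply integrableOn_deriv_of_nonneg (g := fun x : ℝ => x - x * Real.log x)
    · exact (continuous_id.sub Real.continuous_mul_log).continuousOn
    · intro x hx
      have h1 : HasDerivAt (fun x : ℝ => x - x * Real.log x) (1 - (Real.log x + 1)) x :=
        (hasDerivAt_id' x).sub (Real.hasDerivAt_mul_log hx.1.ne')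
      convert h1 using 1
      ring
    · intro x hx
      simpa using Real.log_nonpos hx.1.le hx.2.le
  rw [intervalIntegrable_iff_integrableOn_Ioc_of_le zero_le_one]
  have h2 : IntegrableOn (fun x : ℝ => -(-Real.log x)) (Ioc (0:ℝ) 1) volume := h.neg
  simp only [neg_neg] at h2
  exact h2

lemma log_intInt_0b (b : ℝ) (hb : 1 ≤ b) : IntervalIntegrable Real.log volume 0 b := by
  refine log_intInt_01.trans (intervalIntegrable_log ?_)
  rw [Set.uIcc_of_le hb]
  intro h
  exact absurd h.1 (by norm_num)

lemma lf_int_half : IntervalIntegrable lf volume 0 (Real.pi / 2) := by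
  have hpi : (0:ℝ) < Real.pi / 2 := by positivity
  rw [intervalIntegrable_iff_integrableOn_Ioo_of_le hpi.le]
  have hlog : IntegrableOn Real.log (Ioo (0:ℝ) (Real.pi / 2)) := by
    have h := log_intInt_0b (Real.pi / 2) (by nlinarith [Real.pi_gt_three])
    rw [intervalIntegrable_iff_integrableOn_Ioo_of_le hpi.le] at h
    exact h
  have hg : IntegrableOn
      (fun t : ℝ => Real.log 2 + |Real.log (4 / Real.pi)| + |Real.log t|)
      (Ioo (0:ℝ) (Real.pi / 2)) := by
    refine Integrable.add (integrableOn_const ?_) hlog.abs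
    simp [Real.volume_Ioo]
  refine hg.mono' ?_ ?_
  · exact (Real.measurable_log.comp
      ((continuous_abs.comp (continuous_const.mul continuous_sin)).measurable)).aestronglyMeasurable
  · filter_upwards [ae_restrict_mem measurableSet_Ioo] with x hx
    have hs : 0 < Real.sin x :=
      Real.sin_pos_of_pos_of_lt_pi hx.1 (by linarith [Real.pi_pos, hx.2])
    have habs : |2 * Real.sin x| = 2 * Real.sin x := abs_of_pos (by linarith)
    have hup : Real.log (2 * Real.sin x) ≤ Real.log 2 := by
      apply Real.log_le_log (by positivity)
      nlinarith [Real.sin_le_one x]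
    have hdown : Real.log (4 / Real.pi) + Real.log x ≤ Real.log (2 * Real.sin x) := by
      have h1 : 2 / Real.pi * x ≤ Real.sin x := Real.mul_le_sin hx.1.le hx.2.le
      have h2 : 4 / Real.pi * x ≤ 2 * Real.sin x := by
        have := Real.pi_pos
        rw [div_mul_eq_mul_div, div_le_iff₀ this] at h1 ⊢
        nlinarith
      have h3 : Real.log (4 / Real.pi * x) ≤ Real.log (2 * Real.sin x) := by
        have hpos : 0 < 4 / Real.pi * x := mul_pos (by positivity) hx.1
        exact Real.log_le_log hpos h2
      rwa [Real.log_mul (by positivity) hx.1.ne'] at h3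
    have h2pos : (0:ℝ) ≤ Real.log 2 := Real.log_nonneg one_le_two
    rw [Real.norm_eq_abs]
    show |lf x| ≤ _
    rw [lf, habs]
    rw [abs_le]
    constructor
    · have := neg_abs_le (Real.log (4 / Real.pi))
      have := neg_abs_le (Real.log x)
      linarith
    · have := abs_nonneg (Real.log (4 / Real.pi))
      have := abs_nonneg (Real.log x)
      linarith

lemma lf_int_0pi : IntervalIntegrable lf volume 0 Real.pi := by
  refine lf_int_half.trans ?_
  have h := lf_int_half.comp_sub_left Real.pi
  have heq : (fun x => lf (Real.pi - x)) = lf := funext lf_pi_sub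
  rw [heq] at h
  have h1 : Real.pi - 0 = Real.pi := by ring
  have h2 : Real.pi - Real.pi / 2 = Real.pi / 2 := by ring
  rw [h1, h2] at h
  exact h.symm

lemma lf_int_seg (n : ℤ) : IntervalIntegrable lf volume (n * Real.pi) (n * Real.pi + Real.pi) := by
  have h := lf_int_0pi.comp_sub_right (n * Real.pi)
  have heq : (fun x => lf (x - n * Real.pi)) = lf :=
    funext fun x => lf_periodic.sub_int_mul_eq n
  rw [heq, zero_add, add_comm Real.pi ((n:ℝ) * Real.pi)] at h
  exact h

lemma lf_int_zn (n : ℤ) : IntervalIntegrable lf volume 0 (n * Real.pi) := by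
  induction n using Int.induction_on with
  | zero => simp
  | succ n ih =>
      have h := lf_int_seg n
      have : ((n : ℤ) : ℝ) * Real.pi + Real.pi = ((n + 1 : ℤ) : ℝ) * Real.pi := by
        push_cast; ring
      rw [this] at h
      exact ih.trans h
  | pred n ih =>
      have h := lf_int_seg (-(n:ℤ) - 1)
      have e : ((-(n:ℤ) - 1 : ℤ) : ℝ) * Real.pi + Real.pi = ((-(n:ℤ) : ℤ) : ℝ) * Real.pi := by
        push_cast; ring
      rw [e] at h
      exact ih.trans h.symm

lemma lf_int (a b : ℝ) : IntervalIntegrable lf volume a b := by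
  have hπ := Real.pi_pos
  set m : ℤ := ⌊min a b / Real.pi⌋ with hm
  set M : ℤ := ⌈max a b / Real.pi⌉ with hM
  have h1 : (m : ℝ) * Real.pi ≤ min a b := by
    rw [← le_div_iff₀ hπ]; exact Int.floor_le _
  have h2 : max a b ≤ (M : ℝ) * Real.pi := by
    rw [← div_le_iff₀ hπ]; exact Int.le_ceil _
  have hint : IntervalIntegrable lf volume ((m:ℝ) * Real.pi) ((M:ℝ) * Real.pi) :=
    (lf_int_zn m).symm.trans (lf_int_zn M)
  refine hint.mono_set ?_
  have hmm : (m:ℝ) * Real.pi ≤ (M:ℝ) * Real.pi :=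
    h1.trans ((min_le_max).trans h2)
  refine Set.uIcc_subset_uIcc ?_ ?_ <;> rw [Set.mem_uIcc] <;> left
  · exact ⟨h1.trans (min_le_left a b), (le_max_left a b).trans h2⟩
  · exact ⟨h1.trans (min_le_right a b), (le_max_right a b).trans h2⟩

lemma lf_integral_0pi : (∫ t in (0:ℝ)..Real.pi, lf t) = 0 := by
  have hπ := Real.pi_pos
  set J : ℝ := ∫ t in (0:ℝ)..(Real.pi/2), lf t with hJ
  -- second half equals J
  have hsecond : (∫ t in (Real.pi/2)..Real.pi, lf t) = J := by
    have h := intervalIntegral.integral_comp_sub_left (a := (0:ℝ)) (b := Real.pi/2) lf Real.pi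
    have h1 : Real.pi - 0 = Real.pi := by ring
    have h2 : Real.pi - Real.pi / 2 = Real.pi / 2 := by ring
    rw [h1, h2] at h
    have heq : (∫ x in (0:ℝ)..(Real.pi/2), lf (Real.pi - x)) = J := by
      rw [hJ]; congr 1; funext x; exact lf_pi_sub x
    rw [heq] at h
    exact h.symm
  have hsplit : (∫ t in (0:ℝ)..Real.pi, lf t) = 2 * J := by
    rw [← intervalIntegral.integral_add_adjacent_intervals
      (lf_int 0 (Real.pi/2)) (lf_int (Real.pi/2) Real.pi), hsecond]
    ring
  -- doubling identity
  have hae : ∀ᵐ x ∂(volume : Measure ℝ), x ∈ Set.uIoc (0:ℝ) Real.pi →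
      lf x = lf (x/2) + lf (Real.pi/2 - x/2) := by
    have hne : ∀ᵐ x ∂(volume : Measure ℝ), x ≠ Real.pi := by
      rw [ae_iff]
      have : {x : ℝ | ¬ x ≠ Real.pi} = {Real.pi} := by ext y; simp
      rw [this]
      exact measure_singleton _
    filter_upwards [hne] with x hx hmem
    rw [Set.uIoc_of_le hπ.le] at hmem
    have hx1 : 0 < x := hmem.1
    have hx2 : x < Real.pi := lt_of_le_of_ne hmem.2 hx
    have hs1 : 0 < Real.sin (x/2) :=
      Real.sin_pos_of_pos_of_lt_pi (by linarith) (by linarith)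
    have hc1 : 0 < Real.cos (x/2) :=
      Real.cos_pos_of_mem_Ioo ⟨by linarith, by linarith⟩
    have hsin : Real.sin x = 2 * Real.sin (x/2) * Real.cos (x/2) := by
      have := Real.sin_two_mul (x/2)
      rw [show 2 * (x/2) = x by ring] at this
      linarith
    rw [lf, lf, lf]
    rw [Real.sin_pi_div_two_sub]
    have e1 : |2 * Real.sin x| = (2 * Real.sin (x/2)) * (2 * Real.cos (x/2)) := by
      rw [hsin, abs_of_pos (by positivity)]; ring
    have e2 : |2 * Real.sin (x/2)| = 2 * Real.sin (x/2) := abs_of_pos (by positivity)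
    have e3 : |2 * Real.cos (x/2)| = 2 * Real.cos (x/2) := abs_of_pos (by positivity)
    rw [e1, e2, e3, Real.log_mul (by positivity) (by positivity)]
  have hi1 : IntervalIntegrable (fun x => lf (x/2)) volume 0 Real.pi := by
    have h := (lf_int 0 (Real.pi/2)).comp_mul_right (c := (1/2 : ℝ))
    have heq : (fun x => lf (x * (1/2))) = (fun x => lf (x/2)) := by
      funext x; rw [mul_one_div]
    rw [heq] at h
    have h1 : (0:ℝ) / (1/2) = 0 := by norm_num
    have h2 : (Real.pi/2) / (1/2 : ℝ) = Real.pi := by field_simp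
    rw [h1, h2] at h
    exact h
  have hi2 : IntervalIntegrable (fun x => lf (Real.pi/2 - x/2)) volume 0 Real.pi := by
    have h := hi1.comp_sub_left Real.pi
    have heq : (fun x => lf ((Real.pi - x)/2)) = (fun x => lf (Real.pi/2 - x/2)) := by
      funext x; congr 1; ring
    rw [heq] at h
    have h1 : Real.pi - 0 = Real.pi := by ring
    have h2 : Real.pi - Real.pi = 0 := by ring
    rw [h1, h2] at h
    exact h.symm
  have hv1 : (∫ x in (0:ℝ)..Real.pi, lf (x/2)) = 2 * J := by
    have h := intervalIntegral.integral_comp_div (a := (0:ℝ)) (b := Real.pi) (c := (2:ℝ)) lf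
      (by norm_num)
    rw [h]
    have h1 : (0:ℝ)/2 = 0 := by norm_num
    rw [h1, smul_eq_mul, hJ]
  have hv2 : (∫ x in (0:ℝ)..Real.pi, lf (Real.pi/2 - x/2)) = 2 * J := by
    have h := intervalIntegral.integral_comp_sub_left (a := (0:ℝ)) (b := Real.pi)
      (fun x => lf (x/2)) Real.pi
    have heq : (fun x => lf ((Real.pi - x)/2)) = (fun x => lf (Real.pi/2 - x/2)) := by
      funext x; congr 1; ring
    have h1 : Real.pi - 0 = Real.pi := by ring
    have h2 : Real.pi - Real.pi = 0 := by ring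
    rw [h1, h2] at h
    calc (∫ x in (0:ℝ)..Real.pi, lf (Real.pi/2 - x/2))
        = ∫ x in (0:ℝ)..Real.pi, (fun y => lf (y/2)) (Real.pi - x) := by
          congr 1; funext x; simp only []; congr 1; ring
      _ = ∫ x in (0:ℝ)..Real.pi, lf (x/2) := h
      _ = 2 * J := hv1
  have hquad : (∫ t in (0:ℝ)..Real.pi, lf t) = 4 * J := by
    have h := intervalIntegral.integral_congr_ae (μ := volume) (a := (0:ℝ)) (b := Real.pi)
      (f := lf) (g := fun x => lf (x/2) + lf (Real.pi/2 - x/2)) hae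
    rw [h, intervalIntegral.integral_add hi1 hi2, hv1, hv2]
    ring
  have : 2 * J = 4 * J := by rw [← hsplit, ← hquad]
  have hJ0 : J = 0 := by linarith
  rw [hsplit, hJ0]; ring

theorem stmt_2 (x : ℝ) : lob (x + Real.pi) = lob x := by
  have h := lf_periodic.intervalIntegral_add_eq_add 0 x (fun a b => lf_int a b)
  show -∫ t in (0:ℝ)..(x + Real.pi), lf t = -∫ t in (0:ℝ)..x, lf t
  rw [h, zero_add, lf_integral_0pi, add_zero]
end

section
/- The Lobachevsky function Λ(x) = -∫₀^x log|2 sin t| dt attains its maximum over ℝ at x = π/6, and its maximum value is Λ(π/6). -/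
open Real MeasureTheory Set intervalIntegral

namespace LobAux

noncomputable def F (t : ℝ) : ℝ := Real.log |2 * Real.sin t|

lemma measF : Measurable F :=
  Real.measurable_log.comp
    (continuous_abs.comp (continuous_const.mul Real.continuous_sin)).measurable

lemma Fper : Function.Periodic F Real.pi := by
  intro x; simp [F, Real.sin_add_pi, abs_neg]

@[simp] lemma Fsymm (t : ℝ) : F (Real.pi - t) = F t := by
  simp [F, Real.sin_pi_sub]

lemma norm_F_le {t : ℝ} (ht : t ∈ Set.Ioc 0 (Real.pi / 2)) :
    ‖F t‖ ≤ Real.log 2 + Real.log Real.pi + 2 * t ^ (-(2⁻¹) : ℝ) := by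
  have hπ := Real.pi_pos
  have hst : 0 < Real.sin t := Real.sin_pos_of_pos_of_lt_pi ht.1 (by linarith [ht.2])
  have hs1 : Real.sin t ≤ 1 := Real.sin_le_one t
  have hF : F t = Real.log 2 + Real.log (Real.sin t) := by
    rw [F, abs_of_pos (mul_pos two_pos hst), Real.log_mul (by norm_num) hst.ne']
  have hlogs : Real.log (Real.sin t) ≤ 0 := Real.log_nonpos hst.le hs1
  have hlb : 2 / Real.pi * t ≤ Real.sin t := Real.mul_le_sin ht.1.le ht.2
  have h2t : (0:ℝ) < 2 / Real.pi * t := mul_pos (div_pos two_pos hπ) ht.1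
  have hmono : Real.log (2 / Real.pi * t) ≤ Real.log (Real.sin t) :=
    Real.log_le_log h2t hlb
  have hsplit : Real.log (2 / Real.pi * t) = Real.log 2 - Real.log Real.pi + Real.log t := by
    rw [Real.log_mul (div_pos two_pos hπ).ne' ht.1.ne', Real.log_div (by norm_num) hπ.ne']
  have hrp : (0:ℝ) < t ^ (-(2⁻¹) : ℝ) := Real.rpow_pos_of_pos ht.1 _
  have hlogt : -Real.log t ≤ 2 * t ^ (-(2⁻¹) : ℝ) := by
    have h1 : Real.log (t ^ (-(2⁻¹) : ℝ)) = -(2⁻¹) * Real.log t :=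
      Real.log_rpow ht.1 _
    have h2 : Real.log (t ^ (-(2⁻¹) : ℝ)) ≤ t ^ (-(2⁻¹) : ℝ) - 1 :=
      Real.log_le_sub_one_of_pos hrp
    nlinarith
  have hlog2 : (0:ℝ) ≤ Real.log 2 := Real.log_nonneg (by norm_num)
  calc ‖F t‖ = |Real.log 2 + Real.log (Real.sin t)| := by rw [hF, Real.norm_eq_abs]
    _ ≤ |Real.log 2| + |Real.log (Real.sin t)| := abs_add_le _ _
    _ = Real.log 2 + -Real.log (Real.sin t) := by
        rw [abs_of_nonneg hlog2, abs_of_nonpos hlogs]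
    _ ≤ Real.log 2 + Real.log Real.pi + 2 * t ^ (-(2⁻¹) : ℝ) := by
        rw [hsplit] at hmono; linarith

lemma int_half : IntervalIntegrable F volume 0 (Real.pi / 2) := by
  have hπ := Real.pi_pos
  have hg : IntervalIntegrable
      (fun t : ℝ => Real.log 2 + Real.log Real.pi + 2 * t ^ (-(2⁻¹) : ℝ)) volume 0 (Real.pi/2) :=
    intervalIntegrable_const.add ((intervalIntegrable_rpow' (by norm_num)).const_mul 2)
  refine hg.mono_fun measF.aestronglyMeasurable.restrict ?_
  filter_upwards [ae_restrict_mem measurableSet_uIoc] with t ht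
  rw [uIoc_of_le (by linarith : (0:ℝ) ≤ Real.pi/2)] at ht
  exact (norm_F_le ht).trans (by rw [Real.norm_eq_abs]; exact le_abs_self _)

lemma int_half' : IntervalIntegrable F volume (Real.pi/2) Real.pi := by
  have h := int_half.comp_sub_left Real.pi
  simp only [Fsymm] at h
  have e1 : Real.pi - 0 = Real.pi := by ring
  have e2 : Real.pi - Real.pi/2 = Real.pi/2 := by ring
  rw [e1, e2] at h
  exact h.symm

lemma int_0_pi : IntervalIntegrable F volume 0 Real.pi := int_half.trans int_half'

lemma int_block (k : ℤ) :
    IntervalIntegrable F volume ((k:ℝ) * Real.pi) ((k:ℝ) * Real.pi + Real.pi) := by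
  have h := int_0_pi.comp_sub_right ((k:ℝ) * Real.pi)
  have he : (fun x => F (x - (k:ℝ) * Real.pi)) = F := funext fun x => Fper.sub_int_mul_eq k
  rw [he] at h
  simpa [add_comm] using h

lemma int_nat (n : ℕ) :
    IntervalIntegrable F volume (-((n:ℝ) * Real.pi)) ((n:ℝ) * Real.pi) := by
  induction n with
  | zero => simp
  | succ n ih =>
    have hl := int_block (-(n:ℤ) - 1)
    have hr := int_block (n:ℤ)
    have e1 : ((-(n:ℤ) - 1 : ℤ) : ℝ) * Real.pi = -(((n:ℝ)+1) * Real.pi) := by push_cast; ring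
    have e2 : ((-(n:ℤ) - 1 : ℤ) : ℝ) * Real.pi + Real.pi = -((n:ℝ) * Real.pi) := by
      push_cast; ring
    have e3 : ((n:ℤ) : ℝ) * Real.pi = (n:ℝ) * Real.pi := by push_cast; ring
    have e4 : (n:ℝ) * Real.pi + Real.pi = ((n:ℝ)+1) * Real.pi := by ring
    rw [e2] at hl
    rw [e1] at hl
    rw [e3] at hr
    rw [e4] at hr
    have h := (hl.trans ih).trans hr
    push_cast
    exact h

lemma int_all (a b : ℝ) : IntervalIntegrable F volume a b := by
  have hπ := Real.pi_pos
  obtain ⟨n, hn⟩ := exists_nat_ge (max |a| |b|)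
  have hb : max |a| |b| ≤ (n:ℝ) * Real.pi := by
    nlinarith [le_max_left |a| |b|, abs_nonneg a, Real.pi_gt_three]
  refine (int_nat n).mono_set ?_
  have hmem : ∀ c : ℝ, |c| ≤ max |a| |b| → c ∈ Set.uIcc (-((n:ℝ) * Real.pi)) ((n:ℝ) * Real.pi) := by
    intro c hc
    have h1 : |c| ≤ (n:ℝ) * Real.pi := hc.trans hb
    rw [Set.uIcc_of_le (by nlinarith [abs_nonneg c] : -((n:ℝ) * Real.pi) ≤ (n:ℝ) * Real.pi)]
    exact ⟨neg_le_of_abs_le h1, le_of_abs_le h1⟩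
  exact Set.uIcc_subset_uIcc (hmem a (le_max_left _ _)) (hmem b (le_max_right _ _))

lemma ae_sin_ne : ∀ᵐ t : ℝ, Real.sin t ≠ 0 := by
  have hsub : {t : ℝ | Real.sin t = 0} ⊆ Set.range (fun n : ℤ => (n:ℝ) * Real.pi) := by
    intro t ht
    rcases Real.sin_eq_zero_iff.mp ht with ⟨n, hn⟩
    exact ⟨n, hn⟩
  have h0 : volume {t : ℝ | Real.sin t = 0} = 0 :=
    measure_mono_null hsub ((Set.countable_range _).measure_zero _)
  rw [ae_iff]
  simpa using h0

lemma Fdup {t : ℝ} (ht : Real.sin t ≠ 0) : F t = F (t/2) + F ((Real.pi - t)/2) := by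
  have hs : Real.sin t = 2 * Real.sin (t/2) * Real.cos (t/2) := by
    have h := Real.sin_two_mul (t/2)
    rwa [show 2 * (t/2) = t by ring] at h
  have h1 : Real.sin (t/2) ≠ 0 := fun h => ht (by simp [hs, h])
  have h2 : Real.cos (t/2) ≠ 0 := fun h => ht (by simp [hs, h])
  have hG : F ((Real.pi - t)/2) = Real.log |2 * Real.cos (t/2)| := by
    show Real.log _ = _
    rw [show (Real.pi - t)/2 = Real.pi/2 - t/2 by ring, Real.sin_pi_div_two_sub]
  rw [hG]
  show Real.log |2 * Real.sin t| = Real.log |2 * Real.sin (t/2)| + Real.log |2 * Real.cos (t/2)|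
  have habs : |2 * Real.sin t| = |2 * Real.sin (t/2)| * |2 * Real.cos (t/2)| := by
    rw [← abs_mul]
    congr 1
    rw [hs]; ring
  rw [habs, Real.log_mul (by simpa using h1) (by simpa using h2)]

lemma I0 : ∫ t in (0:ℝ)..Real.pi, F t = 0 := by
  have hπ := Real.pi_pos
  set J := ∫ t in (0:ℝ)..(Real.pi/2), F t with hJ
  have h1 : ∫ t in (Real.pi/2)..Real.pi, F t = J := by
    have h := integral_comp_sub_left (a := (0:ℝ)) (b := Real.pi/2) F Real.pi
    simp only [Fsymm] at h
    rw [show Real.pi - Real.pi/2 = Real.pi/2 by ring, show Real.pi - 0 = Real.pi by ring] at h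
    exact h.symm
  have h2 : ∫ t in (0:ℝ)..Real.pi, F t = 2 * J := by
    rw [← integral_add_adjacent_intervals int_half int_half', h1]; ring
  -- duplication
  have intF2 : IntervalIntegrable (fun t => F (t/2)) volume 0 Real.pi := by
    have h := int_half.comp_mul_right (c := 2⁻¹)
    rw [show (0:ℝ) / 2⁻¹ = 0 by norm_num, show (Real.pi/2) / 2⁻¹ = Real.pi by ring] at h
    simpa [div_eq_mul_inv] using h
  have intG2 : IntervalIntegrable (fun t => F ((Real.pi - t)/2)) volume 0 Real.pi := by
    have h := intF2.comp_sub_left Real.pi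
    rw [show Real.pi - 0 = Real.pi by ring, show Real.pi - Real.pi = 0 by ring] at h
    exact h.symm
  have h3 : ∫ t in (0:ℝ)..Real.pi, F t
      = ∫ t in (0:ℝ)..Real.pi, (F (t/2) + F ((Real.pi - t)/2)) := by
    apply intervalIntegral.integral_congr_ae
    filter_upwards [ae_sin_ne] with t ht _
    exact Fdup ht
  have h4 : ∫ t in (0:ℝ)..Real.pi, F (t/2) = 2 * J := by
    have h := integral_comp_div (a := (0:ℝ)) (b := Real.pi) (c := 2) F (by norm_num)
    rw [show (0:ℝ)/2 = 0 by norm_num] at h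
    rw [h, hJ]; simp
  have h5 : ∫ t in (0:ℝ)..Real.pi, F ((Real.pi - t)/2) = 2 * J := by
    have h := integral_comp_sub_left (a := (0:ℝ)) (b := Real.pi)
      (fun u => F (u/2)) Real.pi
    rw [show Real.pi - 0 = Real.pi by ring, show Real.pi - Real.pi = 0 by ring] at h
    rw [h4] at h
    exact h
  have h6 : ∫ t in (0:ℝ)..Real.pi, (F (t/2) + F ((Real.pi - t)/2)) = 4 * J := by
    rw [integral_add intF2 intG2, h4, h5]; ring
  have hJ0 : J = 0 := by
    have := h3
    rw [h2, h6] at this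
    linarith
  rw [h2, hJ0]; ring

end LobAux

open LobAux

lemma lob_eq (x : ℝ) : lob x = -∫ t in (0:ℝ)..x, F t := rfl

lemma lob_cont : Continuous lob := (continuous_primitive (fun a b => int_all a b) 0).neg

lemma lob0 : lob 0 = 0 := by simp [lob]

lemma lob_per : Function.Periodic lob Real.pi := by
  intro x
  have h1 : ∫ t in x..x+Real.pi, F t = ∫ t in (0:ℝ)..0+Real.pi, F t :=
    Fper.intervalIntegral_add_eq x 0
  have h3 : ∫ t in x..x+Real.pi, F t = 0 := by rw [h1, zero_add, I0]
  have h2 := integral_add_adjacent_intervals (int_all 0 x) (int_all x (x+Real.pi))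
  rw [lob_eq, lob_eq, ← h2, h3, add_zero]

lemma lob_hasDeriv {x : ℝ} (hx : Real.sin x ≠ 0) : HasDerivAt lob (-(F x)) x := by
  have hc : ContinuousAt F x := by
    show ContinuousAt (fun t => Real.log |2 * Real.sin t|) x
    apply ContinuousAt.log
    · exact (continuous_abs.comp (continuous_const.mul Real.continuous_sin)).continuousAt
    · simpa using hx
  have hm : StronglyMeasurableAtFilter F (nhds x) volume :=
    ⟨Set.univ, Filter.univ_mem, measF.aestronglyMeasurable.restrict⟩
  have h := (integral_hasDerivAt_right (int_all 0 x) hm hc).neg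
  exact h

lemma lob_deriv {x : ℝ} (hx : Real.sin x ≠ 0) : deriv lob x = -(F x) :=
  (lob_hasDeriv hx).deriv

lemma sin_lt_half {x : ℝ} (h0 : 0 ≤ x) (h6 : x < Real.pi/6) : Real.sin x < 1/2 := by
  have hπ := Real.pi_pos
  have := Real.strictMonoOn_sin (a := x) (b := Real.pi/6)
    ⟨by linarith, by linarith⟩ ⟨by linarith, by linarith⟩ h6
  rwa [Real.sin_pi_div_six] at this

lemma sin_gt_half {x : ℝ} (h1 : Real.pi/6 < x) (h2 : x < 5*Real.pi/6) :
    1/2 < Real.sin x := by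
  have hπ := Real.pi_pos
  rcases le_total x (Real.pi/2) with hc | hc
  · have := Real.strictMonoOn_sin (a := Real.pi/6) (b := x)
      ⟨by linarith, by linarith⟩ ⟨by linarith, by linarith⟩ h1
    rwa [Real.sin_pi_div_six] at this
  · have := Real.strictMonoOn_sin (a := Real.pi/6) (b := Real.pi - x)
      ⟨by linarith, by linarith⟩ ⟨by linarith, by linarith⟩ (by linarith)
    rw [Real.sin_pi_div_six, Real.sin_pi_sub] at this
    exact this

lemma F_eq {x : ℝ} (hs : 0 < Real.sin x) : F x = Real.log (2 * Real.sin x) := by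
  show Real.log _ = _
  rw [abs_of_pos (by linarith)]

lemma mono1 : MonotoneOn lob (Set.Icc 0 (Real.pi/6)) := by
  have hπ := Real.pi_pos
  apply monotoneOn_of_deriv_nonneg (convex_Icc _ _) lob_cont.continuousOn
  · intro x hx
    rw [interior_Icc] at hx
    have hs : 0 < Real.sin x := Real.sin_pos_of_pos_of_lt_pi hx.1 (by linarith [hx.2])
    exact (lob_hasDeriv hs.ne').differentiableAt.differentiableWithinAt
  · intro x hx
    rw [interior_Icc] at hx
    have hs : 0 < Real.sin x := Real.sin_pos_of_pos_of_lt_pi hx.1 (by linarith [hx.2])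
    rw [lob_deriv hs.ne', F_eq hs, neg_nonneg]
    have : Real.sin x < 1/2 := sin_lt_half hx.1.le hx.2
    exact Real.log_nonpos (by linarith) (by linarith)

lemma mono2 : AntitoneOn lob (Set.Icc (Real.pi/6) (5*Real.pi/6)) := by
  have hπ := Real.pi_pos
  apply antitoneOn_of_deriv_nonpos (convex_Icc _ _) lob_cont.continuousOn
  · intro x hx
    rw [interior_Icc] at hx
    have hs : 0 < Real.sin x := Real.sin_pos_of_pos_of_lt_pi (by linarith [hx.1])
      (by linarith [hx.2])
    exact (lob_hasDeriv hs.ne').differentiableAt.differentiableWithinAt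
  · intro x hx
    rw [interior_Icc] at hx
    have hs : 0 < Real.sin x := Real.sin_pos_of_pos_of_lt_pi (by linarith [hx.1])
      (by linarith [hx.2])
    rw [lob_deriv hs.ne', F_eq hs, neg_nonpos]
    have : 1/2 < Real.sin x := sin_gt_half hx.1 hx.2
    exact Real.log_nonneg (by linarith)

lemma mono3 : MonotoneOn lob (Set.Icc (5*Real.pi/6) Real.pi) := by
  have hπ := Real.pi_pos
  apply monotoneOn_of_deriv_nonneg (convex_Icc _ _) lob_cont.continuousOn
  · intro x hx
    rw [interior_Icc] at hx
    have hs : 0 < Real.sin x := Real.sin_pos_of_pos_of_lt_pi (by linarith [hx.1]) hx.2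
    exact (lob_hasDeriv hs.ne').differentiableAt.differentiableWithinAt
  · intro x hx
    rw [interior_Icc] at hx
    have hs : 0 < Real.sin x := Real.sin_pos_of_pos_of_lt_pi (by linarith [hx.1]) hx.2
    rw [lob_deriv hs.ne', F_eq hs, neg_nonneg]
    have h1 : Real.sin x < 1/2 := by
      have := sin_lt_half (x := Real.pi - x) (by linarith [hx.2]) (by linarith [hx.1])
      rwa [Real.sin_pi_sub] at this
    exact Real.log_nonpos (by linarith) (by linarith)

theorem stmt_5 : ∀ x : ℝ, lob x ≤ lob (Real.pi / 6) := by
  have hπ := Real.pi_pos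
  intro x
  obtain ⟨y, hy, hxy⟩ := lob_per.exists_mem_Ico₀ hπ x
  rw [hxy]
  have h06 : lob 0 ≤ lob (Real.pi/6) :=
    mono1 ⟨le_refl _, by linarith⟩ ⟨by linarith, le_refl _⟩ (by linarith)
  by_cases h1 : y ≤ Real.pi/6
  · exact mono1 ⟨hy.1, h1⟩ ⟨by linarith, le_refl _⟩ h1
  · push_neg at h1
    by_cases h2 : y ≤ 5*Real.pi/6
    · exact mono2 ⟨le_refl _, by linarith⟩ ⟨h1.le, h2⟩ h1.le
    · push_neg at h2
      have hle : lob y ≤ lob Real.pi :=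
        mono3 ⟨h2.le, hy.2.le⟩ ⟨by linarith, le_refl _⟩ hy.2.le
      have hπ0 : lob Real.pi = 0 := by
        have h := lob_per 0
        rw [zero_add] at h
        rw [h, lob0]
      rw [lob0] at h06
      linarith
end

section
/- For an integer n with 0 < n < r (r odd), one has log(∏_{j=1}^n |2 sin(2jπ/r)|) = -(r/(2π))·Λ(2nπ/r) + O(log r), uniformly in n: there is a constant C independent of n and r such that the error term is at most C·log r in absolute value. -/
set_option maxHeartbeats 1000000

open Real MeasureTheory intervalIntegral Set Finset

namespace Stmt8Aux


lemma neg_log_le_rpow {x : ℝ} (hx : 0 < x) : -Real.log x ≤ 2 * x ^ (-(1:ℝ)/2) := by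
  have h1 : Real.log (x ^ ((1:ℝ)/2)) = (1/2) * Real.log x := Real.log_rpow hx _
  have h2 : 0 < x ^ ((1:ℝ)/2) := Real.rpow_pos_of_pos hx _
  have h3 : Real.log ((x ^ ((1:ℝ)/2))⁻¹) ≤ (x ^ ((1:ℝ)/2))⁻¹ - 1 :=
    Real.log_le_sub_one_of_pos (by positivity)
  rw [Real.log_inv, h1] at h3
  have h4 : (x ^ ((1:ℝ)/2))⁻¹ = x ^ (-(1:ℝ)/2) := by
    rw [← Real.rpow_neg hx.le]; norm_num
  nlinarith [h2.le]

lemma abs_log_le {x : ℝ} (hx : 0 < x) : |Real.log x| ≤ 2 * x ^ (-(1:ℝ)/2) + x := by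
  rcases le_total x 1 with h | h
  · rw [abs_of_nonpos (Real.log_nonpos hx.le h)]
    have := neg_log_le_rpow hx
    linarith
  · rw [abs_of_nonneg (Real.log_nonneg h)]
    have h2 : Real.log x ≤ x - 1 := Real.log_le_sub_one_of_pos hx
    have h3 : (0:ℝ) ≤ 2 * x ^ (-(1:ℝ)/2) := by positivity
    linarith

lemma intlog (a b : ℝ) : IntervalIntegrable Real.log volume a b := by
  suffices H : ∀ c : ℝ, 0 ≤ c → IntervalIntegrable Real.log volume 0 c by
    have H2 : ∀ c : ℝ, IntervalIntegrable Real.log volume 0 c := by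
      intro c
      rcases le_total 0 c with h | h
      · exact H c h
      · have h1 := (IntervalIntegrable.iff_comp_neg).mp (H (-c) (by linarith))
        have h2 : (fun x : ℝ => Real.log (-x)) = Real.log := by
          funext x; exact Real.log_neg_eq_log x
        rw [h2, neg_zero, neg_neg] at h1
        exact h1
    exact (H2 a).symm.trans (H2 b)
  intro c hc
  rw [intervalIntegrable_iff_integrableOn_Ioc_of_le hc]
  have hmeas : AEStronglyMeasurable Real.log (volume.restrict (Ioc 0 c)) :=
    Real.measurable_log.aestronglyMeasurable
  have hg : IntegrableOn (fun x : ℝ => 2 * x ^ (-(1:ℝ)/2) + x) (Ioc 0 c) volume := by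
    have h1 : IntervalIntegrable (fun x : ℝ => 2 * x ^ (-(1:ℝ)/2) + x) volume 0 c := by
      apply IntervalIntegrable.add
      · exact (intervalIntegrable_rpow' (by norm_num)).const_mul 2
      · exact (continuous_id).intervalIntegrable 0 c
    rwa [intervalIntegrable_iff_integrableOn_Ioc_of_le hc] at h1
  apply Integrable.mono' hg hmeas
  filter_upwards [ae_restrict_mem measurableSet_Ioc] with x hx
  rw [Real.norm_eq_abs]
  exact abs_log_le hx.1




lemma small_log_int {e : ℝ} (he : 0 < e) (he1 : e ≤ 1) :
    |∫ u in (0:ℝ)..e, Real.log u| ≤ 4 * e ^ ((1:ℝ)/2) := by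
  have h1 : ‖∫ u in (0:ℝ)..e, Real.log u‖ ≤ ∫ u in (0:ℝ)..e, ‖Real.log u‖ :=
    intervalIntegral.norm_integral_le_integral_norm he.le
  have h2 : ∫ u in (0:ℝ)..e, ‖Real.log u‖ ≤ ∫ u in (0:ℝ)..e, 2 * u ^ (-(1:ℝ)/2) := by
    apply intervalIntegral.integral_mono_on he.le ((intlog 0 e).norm)
      ((intervalIntegrable_rpow' (by norm_num)).const_mul 2)
    intro x hx
    rcases eq_or_lt_of_le hx.1 with h | h
    · rw [← h]
      simp only [Real.log_zero, norm_zero]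
      rw [show ((0:ℝ) ^ (-(1:ℝ)/2)) = 0 from Real.zero_rpow (by norm_num)]
      norm_num
    · rw [Real.norm_eq_abs, abs_of_nonpos (Real.log_nonpos h.le (hx.2.trans he1))]
      exact neg_log_le_rpow h
  have h3 : ∫ u in (0:ℝ)..e, 2 * u ^ (-(1:ℝ)/2) = 4 * e ^ ((1:ℝ)/2) := by
    rw [intervalIntegral.integral_const_mul, integral_rpow (Or.inl (by norm_num))]
    rw [show (-(1:ℝ)/2 + 1) = (1:ℝ)/2 by norm_num,
      show ((0:ℝ) ^ ((1:ℝ)/2)) = 0 from Real.zero_rpow (by norm_num)]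
    ring
  calc |∫ u in (0:ℝ)..e, Real.log u| ≤ _ := h1
    _ ≤ _ := h2
    _ = _ := h3

lemma integral_log_from_zero {c : ℝ} (hc : 0 < c) :
    ∫ u in (0:ℝ)..c, Real.log u = c * Real.log c - c := by
  set D := (∫ u in (0:ℝ)..c, Real.log u) - (c * Real.log c - c) with hD
  have key : ∀ e : ℝ, 0 < e → e ≤ min c 1 → |D| ≤ 7 * e ^ ((1:ℝ)/2) := by
    intro e he hec
    have hec' : e ≤ c := hec.trans (min_le_left _ _)
    have he1 : e ≤ 1 := hec.trans (min_le_right _ _)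
    have hsplit : (∫ u in (0:ℝ)..e, Real.log u) + (∫ u in e..c, Real.log u)
        = ∫ u in (0:ℝ)..c, Real.log u :=
      intervalIntegral.integral_add_adjacent_intervals (intlog 0 e) (intlog e c)
    have hval : ∫ u in e..c, Real.log u = c * Real.log c - e * Real.log e - c + e :=
      integral_log
    have hDval : D = (∫ u in (0:ℝ)..e, Real.log u) + (e - e * Real.log e) := by
      rw [hD, ← hsplit, hval]; ring
    have b1 := small_log_int he he1
    have b2 : |e - e * Real.log e| ≤ 3 * e ^ ((1:ℝ)/2) := by
      have h1 : -Real.log e ≤ 2 * e ^ (-(1:ℝ)/2) := neg_log_le_rpow he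
      have h2 : 0 ≤ -Real.log e := neg_nonneg.2 (Real.log_nonpos he.le he1)
      have h3 : e - e * Real.log e = e + e * (-Real.log e) := by ring
      have h4 : e * (-Real.log e) ≤ e * (2 * e ^ (-(1:ℝ)/2)) :=
        mul_le_mul_of_nonneg_left h1 he.le
      have h5 : e * (2 * e ^ (-(1:ℝ)/2)) = 2 * e ^ ((1:ℝ)/2) := by
        have h5a : e ^ (1:ℝ) * e ^ (-(1:ℝ)/2) = e ^ ((1:ℝ)/2) := by
          rw [← Real.rpow_add he]; norm_num
        rw [Real.rpow_one] at h5a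
        linear_combination 2 * h5a
      have h6 : e ≤ e ^ ((1:ℝ)/2) := by
        calc e = e ^ (1:ℝ) := (Real.rpow_one e).symm
          _ ≤ e ^ ((1:ℝ)/2) := Real.rpow_le_rpow_of_exponent_ge he he1 (by norm_num)
      rw [abs_of_nonneg (by nlinarith [mul_nonneg he.le h2])]
      nlinarith
    rw [hDval]
    calc |(∫ u in (0:ℝ)..e, Real.log u) + (e - e * Real.log e)|
        ≤ |∫ u in (0:ℝ)..e, Real.log u| + |e - e * Real.log e| := abs_add_le _ _
      _ ≤ 7 * e ^ ((1:ℝ)/2) := by linarith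
  have hD0 : D = 0 := by
    by_contra hne
    have hpos : 0 < |D| := abs_pos.2 hne
    set e := min (min c 1) ((|D| / 14) ^ 2) with hee
    have he : 0 < e := by positivity
    have hec : e ≤ min c 1 := min_le_left _ _
    have := key e he hec
    have h2 : e ^ ((1:ℝ)/2) ≤ |D| / 14 := by
      have h3 : e ≤ (|D| / 14) ^ 2 := min_le_right _ _
      calc e ^ ((1:ℝ)/2) ≤ ((|D| / 14) ^ 2) ^ ((1:ℝ)/2) :=
            Real.rpow_le_rpow he.le h3 (by norm_num)
        _ = |D| / 14 := by
            rw [← Real.rpow_natCast ((|D|/14)) 2, ← Real.rpow_mul (by positivity)]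
            norm_num
    nlinarith
  linarith [hD0, abs_nonneg D]

lemma integral_log_gen (a b : ℝ) :
    ∫ u in a..b, Real.log u = (b * Real.log b - b) - (a * Real.log a - a) := by
  have base : ∀ c : ℝ, ∫ u in (0:ℝ)..c, Real.log u = c * Real.log c - c := by
    intro c
    rcases lt_trichotomy c 0 with h | h | h
    · have h2 : ∫ x in (0:ℝ)..(-c), Real.log (-x) = ∫ u in c..(0:ℝ), Real.log u := by
        simpa using intervalIntegral.integral_comp_neg (a := (0:ℝ)) (b := -c) Real.log
      have h3 : ∫ x in (0:ℝ)..(-c), Real.log (-x) = ∫ x in (0:ℝ)..(-c), Real.log x :=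
        intervalIntegral.integral_congr (fun x _ => Real.log_neg_eq_log x)
      have h4 := integral_log_from_zero (c := -c) (by linarith : (0:ℝ) < -c)
      rw [intervalIntegral.integral_symm, ← h2, h3, h4, Real.log_neg_eq_log]; ring
    · simp [h]
    · exact integral_log_from_zero h
  have h1 := intervalIntegral.integral_add_adjacent_intervals (intlog a 0) (intlog 0 b)
  have h2 : ∫ u in a..(0:ℝ), Real.log u = - (a * Real.log a - a) := by
    rw [intervalIntegral.integral_symm, base a]
  rw [← h1, h2, base b]; ring

lemma xlog_mono {x y : ℝ} (hx : 0 < x) (hxy : x ≤ y) (hy : y ≤ 1) :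
    x * (1 - Real.log x) ≤ y * (1 - Real.log y) := by
  have hy0 : 0 < y := lt_of_lt_of_le hx hxy
  set t := x / y with ht
  have ht0 : 0 < t := by positivity
  have ht1 : t ≤ 1 := by rw [ht, div_le_one hy0]; exact hxy
  have hlog : Real.log x = Real.log t + Real.log y := by
    rw [ht, Real.log_div hx.ne' hy0.ne']; ring
  have hkey : Real.log (1/t) ≤ 1/t - 1 := Real.log_le_sub_one_of_pos (by positivity)
  rw [Real.log_div one_ne_zero ht0.ne', Real.log_one] at hkey
  -- (1-t) + t * log t ≥ 0
  have h2 : 0 ≤ (1 - t) + t * Real.log t := by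
    have h2a := mul_le_mul_of_nonneg_left hkey ht0.le
    have hinv : t * (1/t) = 1 := by field_simp
    nlinarith [h2a, hinv]
  have hly : Real.log y ≤ 0 := Real.log_nonpos hy0.le hy
  have hxt : x = t * y := by rw [ht]; field_simp
  have e1 : 0 ≤ y * ((1 - t) + t * Real.log t) := mul_nonneg hy0.le h2
  have e2 : 0 ≤ (1 - t) * (-Real.log y) * y :=
    mul_nonneg (mul_nonneg (sub_nonneg.2 ht1) (neg_nonneg.2 hly)) hy0.le
  rw [hlog, hxt]
  nlinarith [e1, e2]




noncomputable def psi (u : ℝ) : ℝ := (|Real.log u| - Real.log u) / 2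

lemma psi_nonneg (u : ℝ) : 0 ≤ psi u := by
  unfold psi; have := le_abs_self (Real.log u); linarith

lemma psi_intble (a b : ℝ) : IntervalIntegrable psi volume a b :=
  (((intlog a b).norm.sub (intlog a b)).div_const 2)

lemma psi_even (u : ℝ) : psi (-u) = psi u := by unfold psi; rw [Real.log_neg_eq_log]

lemma psi_of_ge_one {u : ℝ} (hu : 1 ≤ u) : psi u = 0 := by
  unfold psi; rw [abs_of_nonneg (Real.log_nonneg hu)]; ring

lemma psi_of_le_one {u : ℝ} (h0 : 0 ≤ u) (h1 : u ≤ 1) : psi u = -Real.log u := by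
  unfold psi
  rcases eq_or_lt_of_le h0 with h | h
  · rw [← h]; simp [Real.log_zero]
  · rw [abs_of_nonpos (Real.log_nonpos h.le h1)]; ring

/-- `∫₀^b ψ ≤ M (1 - log M)` where `M = min (2L) 1`, provided `0 ≤ b ≤ 2L`. -/
lemma psi_low {b L : ℝ} (hb0 : 0 ≤ b) (hbL : b ≤ 2 * L) (hL : 0 < L) :
    ∫ u in (0:ℝ)..b, psi u ≤ (min (2*L) 1) * (1 - Real.log (min (2*L) 1)) := by
  set M := min (2*L) 1 with hM
  have hM0 : 0 < M := lt_min (by linarith) one_pos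
  have hM1 : M ≤ 1 := min_le_right _ _
  have hMpos : 0 < M * (1 - Real.log M) := by
    have : Real.log M ≤ 0 := Real.log_nonpos hM0.le hM1
    nlinarith
  rcases eq_or_lt_of_le hb0 with h | hb
  · rw [← h]; simp [hMpos.le]
  set c := min b 1 with hc
  have hc0 : 0 < c := lt_min hb one_pos
  have hc1 : c ≤ 1 := min_le_right _ _
  have hcb : c ≤ b := min_le_left _ _
  have hint1 : ∫ u in (0:ℝ)..c, psi u = c * (1 - Real.log c) := by
    have : ∫ u in (0:ℝ)..c, psi u = ∫ u in (0:ℝ)..c, -Real.log u := by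
      apply intervalIntegral.integral_congr
      intro u hu
      rw [Set.uIcc_of_le hc0.le] at hu
      exact psi_of_le_one hu.1 (hu.2.trans hc1)
    rw [this, intervalIntegral.integral_neg, integral_log_gen]
    simp [Real.log_zero]; ring
  have hint2 : ∫ u in c..b, psi u = 0 := by
    rcases eq_or_lt_of_le hcb with h | h
    · rw [h]; simp
    · have hc1' : c = 1 := by
        rcases le_total b 1 with hb1 | hb1
        · exfalso; rw [hc] at h; rw [min_eq_left hb1] at h; exact lt_irrefl _ h
        · rw [hc, min_eq_right hb1]
      have : ∫ u in c..b, psi u = ∫ u in c..b, 0 := by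
        apply intervalIntegral.integral_congr
        intro u hu
        rw [Set.uIcc_of_le hcb] at hu
        exact psi_of_ge_one (hc1' ▸ hu.1)
      rw [this]; simp
  have hsplit : (∫ u in (0:ℝ)..c, psi u) + (∫ u in c..b, psi u) = ∫ u in (0:ℝ)..b, psi u :=
    intervalIntegral.integral_add_adjacent_intervals (psi_intble 0 c) (psi_intble c b)
  have hcM : c ≤ M := le_min (hc.symm ▸ (min_le_left b 1).trans (by linarith)) hc1
  have := xlog_mono hc0 hcM hM1
  rw [← hsplit, hint1, hint2]
  linarith

lemma psi_int_bound {a b L : ℝ} (hab : a ≤ b) (hlen : b - a ≤ L) (hL : 0 < L) :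
    ∫ u in a..b, psi u ≤
      2 * (min (2*L) 1) * (1 - Real.log (min (2*L) 1)) + L * (1 + |Real.log L|) := by
  set M := min (2*L) 1 with hM
  have hM0 : 0 < M := lt_min (by linarith) one_pos
  have hM1 : M ≤ 1 := min_le_right _ _
  have hMpos : 0 ≤ M * (1 - Real.log M) := by
    have : Real.log M ≤ 0 := Real.log_nonpos hM0.le hM1
    nlinarith
  have hLpos : 0 ≤ L * (1 + |Real.log L|) := by positivity
  -- main case: 0 ≤ a
  have main : ∀ a b : ℝ, 0 ≤ a → a ≤ b → b - a ≤ L →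
      ∫ u in a..b, psi u ≤ M * (1 - Real.log M) + L * (1 + |Real.log L|) := by
    intro a b ha0 hab hlen
    rcases le_total a L with haL | haL
    · -- extend to 0
      have h1 : (∫ u in (0:ℝ)..a, psi u) + (∫ u in a..b, psi u) = ∫ u in (0:ℝ)..b, psi u :=
        intervalIntegral.integral_add_adjacent_intervals (psi_intble 0 a) (psi_intble a b)
      have h2 : 0 ≤ ∫ u in (0:ℝ)..a, psi u :=
        intervalIntegral.integral_nonneg ha0 (fun u _ => psi_nonneg u)
      have h3 := psi_low (hb0 := ha0.trans hab) (hbL := by linarith) hL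
      linarith
    · -- away from 0 : constant bound
      have hconst : ∫ u in a..b, psi u ≤ ∫ u in a..b, |Real.log L| := by
        apply intervalIntegral.integral_mono_on hab (psi_intble a b)
          intervalIntegrable_const
        intro u hu
        have huL : L ≤ u := haL.trans hu.1
        rcases le_total 1 u with h1 | h1
        · rw [psi_of_ge_one h1]; positivity
        · rw [psi_of_le_one (hL.le.trans huL) h1]
          have h2 : Real.log L ≤ Real.log u := Real.log_le_log hL huL
          calc -Real.log u ≤ -Real.log L := by linarith
            _ ≤ |Real.log L| := neg_le_abs _
      rw [intervalIntegral.integral_const, smul_eq_mul] at hconst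
      have : (b - a) * |Real.log L| ≤ L * |Real.log L| :=
        mul_le_mul_of_nonneg_right hlen (abs_nonneg _)
      have hL2 : 0 ≤ L := hL.le
      nlinarith [abs_nonneg (Real.log L)]
  rcases le_total 0 a with ha | ha
  · have := main a b ha hab hlen; linarith
  rcases le_total b 0 with hb | hb
  · -- reflect
    have h1a : ∫ x in (-b)..(-a), psi (-x) = ∫ u in a..b, psi u := by
      simpa using intervalIntegral.integral_comp_neg (a := -b) (b := -a) psi
    have h1b : ∫ x in (-b)..(-a), psi (-x) = ∫ x in (-b)..(-a), psi x :=
      intervalIntegral.integral_congr (fun u _ => psi_even u)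
    have := main (-b) (-a) (by linarith) (by linarith) (by linarith)
    rw [← h1a, h1b]; linarith
  · -- straddle
    have h1 : (∫ u in a..(0:ℝ), psi u) + (∫ u in (0:ℝ)..b, psi u) = ∫ u in a..b, psi u :=
      intervalIntegral.integral_add_adjacent_intervals (psi_intble a 0) (psi_intble 0 b)
    have h2 : ∫ u in a..(0:ℝ), psi u = ∫ u in (0:ℝ)..(-a), psi u := by
      have h2a : ∫ x in (0:ℝ)..(-a), psi (-x) = ∫ x in a..(0:ℝ), psi x := by
        simpa using intervalIntegral.integral_comp_neg (a := (0:ℝ)) (b := -a) psi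
      have h2b : ∫ x in (0:ℝ)..(-a), psi (-x) = ∫ x in (0:ℝ)..(-a), psi x :=
        intervalIntegral.integral_congr (fun u _ => psi_even u)
      rw [← h2a, h2b]
    have h3 := psi_low (b := -a) (by linarith) (by linarith) hL
    have h4 := psi_low (b := b) (by linarith) (by linarith) hL
    rw [← h1, h2]
    linarith

/-- Key uniform estimate: integral of `|log|` over a short interval inside `[-2π, 2π]`. -/
lemma abs_logint {a b L : ℝ} (hab : a ≤ b) (hlen : b - a ≤ L) (hL : 0 < L)
    (ha2 : -(2*π) ≤ a) (hb2 : b ≤ 2*π) :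
    ∫ u in a..b, |Real.log u| ≤ (b - a) * Real.log (2*π)
      + 4 * (min (2*L) 1) * (1 - Real.log (min (2*L) 1)) + 2 * L * (1 + |Real.log L|) := by
  have hid : ∀ u : ℝ, |Real.log u| = Real.log u + 2 * psi u := by
    intro u; unfold psi; ring
  have hsplit : ∫ u in a..b, |Real.log u|
      = (∫ u in a..b, Real.log u) + 2 * ∫ u in a..b, psi u := by
    rw [← intervalIntegral.integral_const_mul, ← intervalIntegral.integral_add
      (intlog a b) ((psi_intble a b).const_mul 2)]
    apply intervalIntegral.integral_congr
    intro u _; exact hid u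
  have hlog2pi : ∀ u : ℝ, u ∈ Set.Icc a b → Real.log u ≤ Real.log (2*π) := by
    intro u hu
    have h2pi : (1:ℝ) ≤ 2*π := by nlinarith [Real.pi_gt_three]
    rcases eq_or_ne u 0 with h | h
    · rw [h, Real.log_zero]; exact Real.log_nonneg h2pi
    · rw [← Real.log_abs u]
      apply Real.log_le_log (abs_pos.2 h)
      rw [abs_le]; constructor
      · linarith [hu.1]
      · linarith [hu.2]
  have hup : (∫ u in a..b, Real.log u) ≤ (b - a) * Real.log (2*π) := by
    have := intervalIntegral.integral_mono_on hab (intlog a b) intervalIntegrable_const hlog2pi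
    rw [intervalIntegral.integral_const, smul_eq_mul] at this
    linarith
  have hpsi := psi_int_bound hab hlen hL
  rw [hsplit]
  linarith




/-- Jordan-type bound on `[0, π]`. -/
lemma sin_lb1 {t d : ℝ} (hd : 0 ≤ d) (h1 : d ≤ t) (h2 : d ≤ π - t) :
    2 / π * d ≤ Real.sin t := by
  rcases le_total t (π/2) with h | h
  · have hs := Real.mul_le_sin (by linarith : (0:ℝ) ≤ t) h
    have h4 : 2/π * d ≤ 2/π * t := by
      apply mul_le_mul_of_nonneg_left h1; positivity
    linarith
  · have h3 : Real.sin t = Real.sin (π - t) := (Real.sin_pi_sub t).symm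
    have hs := Real.mul_le_sin (by linarith : (0:ℝ) ≤ π - t) (by linarith : π - t ≤ π/2)
    have h4 : 2/π * d ≤ 2/π * (π - t) := by
      apply mul_le_mul_of_nonneg_left h2; positivity
    rw [h3]; linarith

/-- Jordan-type bound on `[0, 2π]` in terms of distance to `{0, π, 2π}`. -/
lemma sin_lb {t d : ℝ} (hd : 0 ≤ d) (h0 : d ≤ t) (h1 : d ≤ |t - π|) (h2 : d ≤ 2*π - t) :
    2 / π * d ≤ |Real.sin t| := by
  rcases le_total t π with h | h
  · have h1' : d ≤ π - t := by
      rw [abs_of_nonpos (by linarith)] at h1; linarith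
    have hs : 0 ≤ Real.sin t := Real.sin_nonneg_of_nonneg_of_le_pi (by linarith) h
    rw [abs_of_nonneg hs]
    exact sin_lb1 hd h0 h1'
  · have h1' : d ≤ t - π := by
      rw [abs_of_nonneg (by linarith)] at h1; linarith
    have hs : Real.sin (t - π) = -Real.sin t := by
      rw [Real.sin_sub]; simp
    have := sin_lb1 hd h1' (by linarith : d ≤ π - (t - π))
    rw [hs] at this
    calc 2/π * d ≤ -Real.sin t := this
      _ ≤ |Real.sin t| := neg_le_abs _

/-- Harmonic sum bound. -/
lemma harm (K : ℕ) : (∑ i ∈ Finset.Icc 1 K, (1:ℝ)/i) ≤ 1 + Real.log K := by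
  induction K with
  | zero => simp
  | succ K ih =>
    rcases Nat.eq_zero_or_pos K with h | h
    · subst h; norm_num
    · rw [Finset.sum_Icc_succ_top (by omega : 1 ≤ K + 1)]
      have hstep : (1:ℝ)/(K+1) ≤ Real.log (K+1) - Real.log K := by
        have hK : (0:ℝ) < K := by exact_mod_cast h
        have hkey : Real.log ((K:ℝ)/(K+1)) ≤ (K:ℝ)/(K+1) - 1 :=
          Real.log_le_sub_one_of_pos (by positivity)
        rw [Real.log_div (by positivity) (by positivity)] at hkey
        have : (K:ℝ)/(K+1) - 1 = -(1/(K+1)) := by field_simp; ring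
        rw [this] at hkey
        linarith
      push_cast
      push_cast at ih hstep
      linarith

/-- Sum of `1/(g j - 2)` over an injective `g` with values in `[3, K+2]`. -/
lemma sum_inv {T : Finset ℕ} {g : ℕ → ℕ} {K : ℕ}
    (hinj : ∀ x ∈ T, ∀ y ∈ T, g x = g y → x = y)
    (h3 : ∀ j ∈ T, 3 ≤ g j) (hK : ∀ j ∈ T, g j ≤ K + 2) :
    ∑ j ∈ T, 1/((g j : ℝ) - 2) ≤ 1 + Real.log K := by
  have e1 : ∑ j ∈ T, 1/((g j : ℝ) - 2) = ∑ k ∈ T.image g, 1/((k:ℝ) - 2) :=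
    (Finset.sum_image (f := fun k : ℕ => 1/((k:ℝ) - 2)) hinj).symm
  have e2 : ∑ k ∈ T.image g, 1/((k:ℝ) - 2) ≤ ∑ k ∈ Finset.Icc 3 (K+2), 1/((k:ℝ) - 2) := by
    apply Finset.sum_le_sum_of_subset_of_nonneg
    · intro k hk
      obtain ⟨j, hj, rfl⟩ := Finset.mem_image.1 hk
      exact Finset.mem_Icc.2 ⟨h3 j hj, hK j hj⟩
    · intro k hk _
      have h3k := (Finset.mem_Icc.1 hk).1
      have h3k' : (3:ℝ) ≤ k := by exact_mod_cast h3k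
      have hpos : (0:ℝ) < (k:ℝ) - 2 := by linarith
      positivity
  have e3 : ∑ k ∈ Finset.Icc 3 (K+2), 1/((k:ℝ) - 2) = ∑ i ∈ Finset.Icc 1 K, (1:ℝ)/i := by
    rw [show Finset.Icc 3 (K+2) = Finset.map (addRightEmbedding 2) (Finset.Icc 1 K) by
      rw [Finset.map_add_right_Icc]]
    rw [Finset.sum_map]
    apply Finset.sum_congr rfl
    intro i _
    simp only [addRightEmbedding_apply]
    push_cast
    ring_nf
  rw [e1]
  calc _ ≤ _ := e2
    _ = _ := e3
    _ ≤ _ := harm K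

/-- Pointwise bound `|log (2 sin t)| ≤ 1 + Σ_s |log (t - s)|` on `[0, 2π]`. -/
lemma f_ptwise {t : ℝ} (ht0 : 0 ≤ t) (ht2 : t ≤ 2*π) :
    |Real.log (2 * Real.sin t)| ≤
      1 + (|Real.log t| + |Real.log (t - π)| + |Real.log (t - 2*π)|) := by
  have hpi := Real.pi_gt_three
  rcases eq_or_ne (Real.sin t) 0 with h | h
  · rw [h, mul_zero, Real.log_zero, abs_zero]; positivity
  · have ht0' : 0 < t := by
      rcases eq_or_lt_of_le ht0 with h' | h'
      · exfalso; apply h; rw [← h']; simp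
      · exact h'
    have htpi : t ≠ π := by
      intro h'; apply h; rw [h']; simp
    have ht2' : t < 2*π := by
      rcases eq_or_lt_of_le ht2 with h' | h'
      · exfalso; apply h; rw [h']; simp [Real.sin_two_pi]
      · exact h'
    set d := min (min t |t - π|) (2*π - t) with hd
    have hd0 : 0 < d := by
      apply lt_min (lt_min ht0' (abs_pos.2 (sub_ne_zero.2 htpi)))
      linarith
    have hsin : 2/π * d ≤ |Real.sin t| := by
      apply sin_lb hd0.le
      · exact (min_le_left _ _).trans (min_le_left _ _)
      · exact (min_le_left _ _).trans (min_le_right _ _)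
      · exact min_le_right _ _
    have h2sin : d ≤ |2 * Real.sin t| := by
      rw [abs_mul]
      have : 2/π * d ≥ 1/2 * d := by
        apply mul_le_mul_of_nonneg_right _ hd0.le
        rw [div_le_div_iff₀ (by norm_num) (by positivity)]
        nlinarith [Real.pi_lt_d2]
      calc d = 2 * (1/2 * d) := by ring
        _ ≤ 2 * (2/π * d) := by linarith
        _ ≤ |2| * |Real.sin t| := by rw [abs_of_nonneg (by norm_num : (0:ℝ) ≤ 2)]; linarith
    -- lower bound : log(2 sin t) ≥ log d
    have hlow : Real.log d ≤ Real.log (2 * Real.sin t) := by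
      rw [← Real.log_abs (2 * Real.sin t)]
      exact Real.log_le_log hd0 h2sin
    -- -log d ≤ sum of |log (t-s)|
    have hsum : -Real.log d ≤ |Real.log t| + |Real.log (t - π)| + |Real.log (t - 2*π)| := by
      have habs : ∀ x : ℝ, Real.log |x| = Real.log x := fun x => Real.log_abs x
      have : d = t ∨ d = |t - π| ∨ d = 2*π - t := by
        rcases min_cases (min t |t - π|) (2*π - t) with ⟨h1, -⟩ | ⟨h1, -⟩
        · rcases min_cases t |t - π| with ⟨h2, -⟩ | ⟨h2, -⟩
          · left; rw [hd, h1, h2]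
          · right; left; rw [hd, h1, h2]
        · right; right; rw [hd, h1]
      rcases this with h' | h' | h'
      · have : -Real.log d ≤ |Real.log t| := by rw [h']; exact (neg_le_abs _).trans (le_refl _)
        have p1 : (0:ℝ) ≤ |Real.log (t - π)| := abs_nonneg _
        have p2 : (0:ℝ) ≤ |Real.log (t - 2*π)| := abs_nonneg _
        linarith
      · have : -Real.log d ≤ |Real.log (t - π)| := by
          rw [h', habs]; exact neg_le_abs _
        have p1 : (0:ℝ) ≤ |Real.log t| := abs_nonneg _
        have p2 : (0:ℝ) ≤ |Real.log (t - 2*π)| := abs_nonneg _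
        linarith
      · have : -Real.log d ≤ |Real.log (t - 2*π)| := by
          rw [h']
          have e : Real.log (2*π - t) = Real.log (t - 2*π) := by
            rw [← Real.log_neg_eq_log (t - 2*π)]; ring_nf
          rw [e]; exact neg_le_abs _
        have p1 : (0:ℝ) ≤ |Real.log t| := abs_nonneg _
        have p2 : (0:ℝ) ≤ |Real.log (t - π)| := abs_nonneg _
        linarith
    -- upper bound : log(2 sin t) ≤ log 2 ≤ 1
    have hup : Real.log (2 * Real.sin t) ≤ 1 := by
      rw [← Real.log_abs, abs_mul]
      have h1 : |(2:ℝ)| * |Real.sin t| ≤ 2 := by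
        rw [abs_of_nonneg (by norm_num : (0:ℝ) ≤ 2)]
        nlinarith [Real.abs_sin_le_one t, abs_nonneg (Real.sin t)]
      have h2 : (0:ℝ) < |2| * |Real.sin t| := by
        rw [abs_of_nonneg (by norm_num : (0:ℝ) ≤ 2)]
        positivity
      calc Real.log (|2| * |Real.sin t|) ≤ Real.log 2 := Real.log_le_log h2 h1
        _ ≤ 1 := by
          rw [show (1:ℝ) = Real.log (Real.exp 1) by rw [Real.log_exp]]
          apply Real.log_le_log (by norm_num)
          nlinarith [Real.exp_one_gt_d9]
    rw [abs_le]
    constructor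
    · linarith
    · have p1 : (0:ℝ) ≤ |Real.log t| := abs_nonneg _
      have p2 : (0:ℝ) ≤ |Real.log (t - π)| := abs_nonneg _
      have p3 : (0:ℝ) ≤ |Real.log (t - 2*π)| := abs_nonneg _
      linarith

/-- Interval integrability of `t ↦ log(t - s)` anywhere. -/
lemma intlog_shift (s a b : ℝ) :
    IntervalIntegrable (fun t => Real.log (t - s)) volume a b := by
  have h := (intlog (a - s) (b - s)).comp_sub_right s
  simpa using h

/-- The dominating function. -/
noncomputable def gdom (t : ℝ) : ℝ :=
  1 + (|Real.log t| + |Real.log (t - π)| + |Real.log (t - 2*π)|)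

lemma gdom_intble (a b : ℝ) : IntervalIntegrable gdom volume a b := by
  apply IntervalIntegrable.add intervalIntegrable_const
  apply IntervalIntegrable.add
  apply IntervalIntegrable.add
  · simpa using (intlog_shift 0 a b).norm
  · exact (intlog_shift π a b).norm
  · exact (intlog_shift (2*π) a b).norm

/-- Master integrability of `t ↦ log (2 sin t)` on subintervals of `[0, 2π]`. -/
lemma f_intble {u v : ℝ} (hu0 : 0 ≤ u) (hu2 : u ≤ 2*π) (hv0 : 0 ≤ v) (hv2 : v ≤ 2*π) :
    IntervalIntegrable (fun t => Real.log (2 * Real.sin t)) volume u v := by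
  rw [intervalIntegrable_iff]
  have hsub : Set.uIoc u v ⊆ Set.Icc 0 (2*π) := by
    rw [Set.uIoc]
    intro x hx
    exact ⟨(le_min hu0 hv0).trans hx.1.le, hx.2.trans (max_le hu2 hv2)⟩
  apply MeasureTheory.IntegrableOn.mono_set _ hsub
  have hg : IntegrableOn gdom (Set.Icc 0 (2*π)) volume := by
    have h := gdom_intble 0 (2*π)
    rw [intervalIntegrable_iff_integrableOn_Ioc_of_le (by positivity)] at h
    rwa [integrableOn_Icc_iff_integrableOn_Ioc]
  apply Integrable.mono' hg
    ((Real.measurable_log.comp (measurable_const.mul Real.measurable_sin)).aestronglyMeasurable)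
  filter_upwards [ae_restrict_mem measurableSet_Icc] with t ht
  rw [Real.norm_eq_abs]
  exact f_ptwise ht.1 ht.2




lemma one_le_log {rr : ℝ} (h : 3 ≤ rr) : 1 ≤ Real.log rr := by
  rw [show (1:ℝ) = Real.log (Real.exp 1) by rw [Real.log_exp]]
  apply Real.log_le_log (Real.exp_pos 1)
  nlinarith [Real.exp_one_lt_d9]

lemma log2pi_le : Real.log (2*π) ≤ 2 := by
  have h1 : (0:ℝ) < 2*π := by positivity
  rw [Real.log_le_iff_le_exp h1]
  have : Real.exp 2 = Real.exp 1 * Real.exp 1 := by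
    rw [← Real.exp_add]; norm_num
  nlinarith [Real.exp_one_gt_d9, Real.pi_lt_d2]

lemma sum_range_Icc (F : ℕ → ℝ) (n : ℕ) :
    ∑ k ∈ Finset.range n, F (k+1) = ∑ j ∈ Finset.Icc 1 n, F j := by
  induction n with
  | zero => simp
  | succ n ih =>
    rw [Finset.sum_range_succ, Finset.sum_Icc_succ_top (by omega : 1 ≤ n + 1), ih]

lemma caseA_est {x h d : ℝ} (hh : 0 < h) (hd : h < d)
    (h0 : d ≤ x) (h1 : d ≤ |x - π|) (h2 : d ≤ 2*π - x) :
    |Real.log (2 * Real.sin x) - (1/h) * ∫ t in (x - h)..x, Real.log (2 * Real.sin t)|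
      ≤ π * h / (2 * (d - h)) := by
  have hpi := Real.pi_gt_three
  have hdh : 0 < d - h := by linarith
  set f : ℝ → ℝ := fun t => Real.log (2 * Real.sin t) with hf
  set C : ℝ := π / (2 * (d - h)) with hC
  have hC0 : 0 < C := by positivity
  set s : Set ℝ := Set.Icc (x - h) x with hs
  have hsin : ∀ t ∈ s, 2/π * (d - h) ≤ |Real.sin t| := by
    intro t ht
    obtain ⟨ht1, ht2⟩ := ht
    apply sin_lb (by linarith)
    · linarith
    · have ha := abs_sub_abs_le_abs_sub (x - π) (t - π)
      have h3 : |(x - π) - (t - π)| = x - t := by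
        rw [show (x - π) - (t - π) = x - t by ring, abs_of_nonneg (by linarith)]
      rw [h3] at ha
      linarith
    · linarith
  have hsinne : ∀ t ∈ s, 2 * Real.sin t ≠ 0 := by
    intro t ht
    have := hsin t ht
    have h4 : 0 < |Real.sin t| := by
      have : (0:ℝ) < 2/π * (d - h) := by positivity
      linarith
    intro hcon
    rw [show Real.sin t = 0 by linarith [mul_eq_zero.1 hcon]] at h4
    · simp at h4
  have hder : ∀ t ∈ s, HasDerivWithinAt f ((2 * Real.sin t)⁻¹ * (2 * Real.cos t)) s t := by
    intro t ht
    have h5 : HasDerivAt (fun y => 2 * Real.sin y) (2 * Real.cos t) t :=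
      (Real.hasDerivAt_sin t).const_mul 2
    exact ((Real.hasDerivAt_log (hsinne t ht)).comp t h5).hasDerivWithinAt
  have hbound : ∀ t ∈ s, ‖(2 * Real.sin t)⁻¹ * (2 * Real.cos t)‖ ≤ C := by
    intro t ht
    rw [Real.norm_eq_abs, abs_mul, abs_inv]
    have e1 : (0:ℝ) < 2/π * (d - h) := by positivity
    have e2 : 2/π * (d - h) ≤ |Real.sin t| := hsin t ht
    have e3 : |2 * Real.sin t| = 2 * |Real.sin t| := by
      rw [abs_mul, abs_of_nonneg (by norm_num : (0:ℝ) ≤ 2)]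
    have e4 : |2 * Real.sin t|⁻¹ ≤ (2 * (2/π * (d - h)))⁻¹ := by
      rw [e3]
      apply inv_anti₀ (by linarith)
      linarith
    have e5 : |2 * Real.cos t| ≤ 2 := by
      rw [abs_mul, abs_of_nonneg (by norm_num : (0:ℝ) ≤ 2)]
      nlinarith [Real.abs_cos_le_one t]
    have e6 : (0:ℝ) ≤ |2 * Real.sin t|⁻¹ := by positivity
    calc |2 * Real.sin t|⁻¹ * |2 * Real.cos t| ≤ (2 * (2/π * (d - h)))⁻¹ * 2 := by
          apply mul_le_mul e4 e5 (abs_nonneg _) (by positivity)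
      _ = C := by rw [hC]; field_simp
  have hmvt : ∀ t ∈ s, ‖f x - f t‖ ≤ C * h := by
    intro t ht
    have hx : x ∈ s := ⟨by linarith, le_refl x⟩
    have := Convex.norm_image_sub_le_of_norm_hasDerivWithin_le hder hbound
      (convex_Icc _ _) ht hx
    calc ‖f x - f t‖ ≤ C * ‖x - t‖ := this
      _ ≤ C * h := by
          apply mul_le_mul_of_nonneg_left _ hC0.le
          rw [Real.norm_eq_abs, abs_of_nonneg (by linarith [ht.1, ht.2])]
          linarith [ht.1]
  have hcont : ContinuousOn f s :=
    ContinuousOn.log ((continuous_const.mul Real.continuous_sin).continuousOn) hsinne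
  have hfint : IntervalIntegrable f volume (x - h) x := by
    apply ContinuousOn.intervalIntegrable
    rwa [Set.uIcc_of_le (by linarith)]
  have hsplit : ∫ t in (x - h)..x, (f x - f t)
      = h * f x - ∫ t in (x - h)..x, f t := by
    rw [intervalIntegral.integral_sub intervalIntegrable_const hfint,
      intervalIntegral.integral_const, smul_eq_mul]
    ring
  have hnorm : ‖∫ t in (x - h)..x, (f x - f t)‖ ≤ (C * h) * |x - (x - h)| := by
    apply intervalIntegral.norm_integral_le_of_norm_le_const
    intro t ht
    apply hmvt
    rw [Set.uIoc_of_le (by linarith : x - h ≤ x)] at ht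
    exact ⟨ht.1.le, ht.2⟩
  have e7 : |x - (x - h)| = h := by rw [show x - (x - h) = h by ring, abs_of_pos hh]
  rw [e7] at hnorm
  rw [Real.norm_eq_abs] at hnorm
  have e8 : f x - (1/h) * ∫ t in (x - h)..x, f t
      = (1/h) * ∫ t in (x - h)..x, (f x - f t) := by
    rw [hsplit]; field_simp
  rw [e8, abs_mul, abs_of_nonneg (by positivity : (0:ℝ) ≤ 1/h)]
  calc (1/h) * |∫ t in (x - h)..x, (f x - f t)| ≤ (1/h) * (C * h * h) := by
        apply mul_le_mul_of_nonneg_left _ (by positivity)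
        nlinarith [hnorm]
    _ = π * h / (2 * (d - h)) := by rw [hC]; field_simp





lemma caseB_intbound {aa bb h : ℝ} (hh : 0 < h) (hlen : bb - aa = h)
    (ha0 : 0 ≤ aa) (hb2 : bb ≤ 2*π) :
    ∫ t in aa..bb, gdom t ≤ h + 3*(h*Real.log (2*π)
      + 4*(min (2*h) 1)*(1 - Real.log (min (2*h) 1)) + 2*h*(1+|Real.log h|)) := by
  have hab : aa ≤ bb := by linarith
  have per : ∀ s : ℝ, 0 ≤ s → s ≤ 2*π →
      ∫ t in aa..bb, |Real.log (t - s)| ≤ h*Real.log (2*π)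
        + 4*(min (2*h) 1)*(1 - Real.log (min (2*h) 1)) + 2*h*(1+|Real.log h|) := by
    intro s hs0 hs2
    have e1 : ∫ t in aa..bb, |Real.log (t - s)| = ∫ u in (aa - s)..(bb - s), |Real.log u| :=
      intervalIntegral.integral_comp_sub_right (fun u => |Real.log u|) s
    rw [e1]
    have key := abs_logint (a := aa - s) (b := bb - s) (L := h)
      (by linarith) (by linarith) hh (by linarith) (by linarith)
    have e2 : (bb - s) - (aa - s) = h := by linarith
    rw [e2] at key
    linarith
  have i1 : IntervalIntegrable (fun t => |Real.log t|) volume aa bb := by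
    simpa using (intlog_shift 0 aa bb).norm
  have i2 : IntervalIntegrable (fun t => |Real.log (t - π)|) volume aa bb :=
    (intlog_shift π aa bb).norm
  have i3 : IntervalIntegrable (fun t => |Real.log (t - 2*π)|) volume aa bb :=
    (intlog_shift (2*π) aa bb).norm
  have hsplit : ∫ t in aa..bb, gdom t = (bb - aa)
      + ((∫ t in aa..bb, |Real.log t|) + (∫ t in aa..bb, |Real.log (t - π)|)
        + ∫ t in aa..bb, |Real.log (t - 2*π)|) := by
    unfold gdom
    rw [intervalIntegral.integral_add intervalIntegrable_const ((i1.add i2).add i3),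
      intervalIntegral.integral_const, intervalIntegral.integral_add (i1.add i2) i3,
      intervalIntegral.integral_add i1 i2, smul_eq_mul, mul_one]
  rw [hsplit, hlen]
  have hpi := Real.pi_gt_three
  have p1 := per 0 (le_refl 0) (by linarith)
  have p2 := per π (by linarith) (by linarith)
  have p3 := per (2*π) (by linarith) (le_refl _)
  have e3 : ∫ t in aa..bb, |Real.log t| = ∫ t in aa..bb, |Real.log (t - 0)| := by
    apply intervalIntegral.integral_congr; intro t _; simp
  rw [e3]
  linarith

lemma numericB {rr h : ℝ} (hrr : 3 ≤ rr) (hh : h = 2*π/rr) :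
    Real.log rr + (1/h) * (h + 3*(h*Real.log (2*π)
      + 4*(min (2*h) 1)*(1 - Real.log (min (2*h) 1)) + 2*h*(1+|Real.log h|)))
      ≤ 100 * Real.log rr := by
  have hpi := Real.pi_gt_three
  have hpi2 := Real.pi_lt_d2
  have hr0 : (0:ℝ) < rr := by linarith
  have hh0 : 0 < h := by rw [hh]; positivity
  set lr := Real.log rr with hlr
  have hlr1 : 1 ≤ lr := one_le_log hrr
  have l2pi : Real.log (2*π) ≤ 2 := log2pi_le
  have l2pi0 : 0 ≤ Real.log (2*π) := Real.log_nonneg (by linarith)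
  have hlogh : Real.log h = Real.log (2*π) - lr := by
    rw [hh, Real.log_div (by positivity) (by positivity)]
  have habs : |Real.log h| ≤ lr := by
    rw [abs_le]; constructor <;> rw [hlogh] <;> linarith
  have key1 : (1/h) * (4*(min (2*h) 1)*(1 - Real.log (min (2*h) 1))) ≤ 16 * lr := by
    rcases le_total (2*h) 1 with hc | hc
    · rw [min_eq_left hc]
      have h2h : Real.log (2*h) = Real.log (4*π) - lr := by
        rw [hh, show 2*(2*π/rr) = 4*π/rr by ring,
          Real.log_div (by positivity) (by positivity)]
      have l4pi0 : 0 ≤ Real.log (4*π) := Real.log_nonneg (by linarith)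
      have e : (1/h) * (4*(2*h)*(1 - Real.log (2*h))) = 8 * (1 - Real.log (2*h)) := by
        field_simp; ring
      rw [e, h2h]
      nlinarith
    · rw [min_eq_right hc]
      rw [Real.log_one]
      have e : (1/h) * (4*1*(1 - 0)) = 4/h := by field_simp; norm_num
      rw [e]
      -- 2h ≥ 1 so h ≥ 1/2, 4/h ≤ 8
      have : 4/h ≤ 8 := by rw [div_le_iff₀ hh0]; linarith
      linarith
  have expand : (1/h) * (h + 3*(h*Real.log (2*π)
      + 4*(min (2*h) 1)*(1 - Real.log (min (2*h) 1)) + 2*h*(1+|Real.log h|)))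
      = 1 + 3*Real.log (2*π) + 3*((1/h) * (4*(min (2*h) 1)*(1 - Real.log (min (2*h) 1))))
        + 6*(1+|Real.log h|) := by
    field_simp
    ring
  rw [expand]
  have habs0 : 0 ≤ |Real.log h| := abs_nonneg _
  nlinarith


end Stmt8Aux

open Stmt8Aux




theorem stmt_8 :
    ∃ C : ℝ, 0 < C ∧ ∀ r n : ℕ, Odd r → 3 ≤ r → 0 < n → n < r →
      |Real.log (∏ j ∈ Finset.Icc 1 n, |2 * Real.sin (2 * (j : ℝ) * Real.pi / r)|)
          + ((r : ℝ) / (2 * Real.pi)) * lob (2 * (n : ℝ) * Real.pi / r)|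
        ≤ C * Real.log r := by
  refine ⟨1000, by norm_num, ?_⟩
  intro r n hodd hr3 hn0 hnr
  obtain ⟨kk, hkk⟩ := hodd
  have hpi := Real.pi_gt_three
  have hpi2 := Real.pi_lt_d2
  have hrr3 : (3:ℝ) ≤ (r:ℝ) := by exact_mod_cast hr3
  have hr0 : (0:ℝ) < (r:ℝ) := by linarith
  set h : ℝ := 2*π/(r:ℝ) with hh
  clear_value h
  have hh0 : 0 < h := by rw [hh]; positivity
  set a : ℕ → ℝ := fun k => k * h with ha
  clear_value a
  set lr := Real.log r with hlr
  have hlr1 : 1 ≤ lr := one_le_log hrr3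
  have hgrid : ∀ k : ℕ, k ≤ r → 0 ≤ a k ∧ a k ≤ 2*π := by
    intro k hk
    have hk' : (k:ℝ) ≤ r := by exact_mod_cast hk
    constructor
    · simp only [ha, hh]; positivity
    · simp only [ha, hh]
      calc (k:ℝ) * (2*π/r) ≤ (r:ℝ) * (2*π/r) := by
            apply mul_le_mul_of_nonneg_right hk' (by positivity)
        _ = 2*π := by field_simp
  set m : ℕ → ℕ := fun j => min (min (2*j) (max (r - 2*j) (2*j - r))) (2*(r-j)) with hm
  clear_value m
  have haj : ∀ j : ℕ, a j = 2*(j:ℝ)*π/(r:ℝ) := by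
    intro j; simp only [ha, hh]; ring
  -- distance facts
  have key_dist : ∀ j : ℕ, 1 ≤ j → j ≤ n →
      1 ≤ m j ∧ ((m j : ℝ) * (π/r) ≤ a j ∧ (m j:ℝ) * (π/r) ≤ |a j - π|
        ∧ (m j:ℝ) * (π/r) ≤ 2*π - a j) := by
    intro j hj1 hjn
    have hjr : j < r := lt_of_le_of_lt hjn hnr
    have hjr' : (j:ℝ) < r := by exact_mod_cast hjr
    have hj1' : (1:ℝ) ≤ (j:ℝ) := by exact_mod_cast hj1
    have hm1 : 1 ≤ m j := by simp only [hm]; omega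
    have hπr : (0:ℝ) < π/(r:ℝ) := by positivity
    refine ⟨hm1, ?_, ?_, ?_⟩
    · have hc : m j ≤ 2*j := by simp only [hm]; omega
      have hc' : (m j:ℝ) ≤ 2*(j:ℝ) := by exact_mod_cast hc
      calc (m j:ℝ) * (π/r) ≤ (2*(j:ℝ)) * (π/r) :=
            mul_le_mul_of_nonneg_right hc' hπr.le
        _ = a j := by rw [haj j]; ring
    · rcases le_or_gt (2*j) r with hc | hc
      · have hc1 : m j + 2*j ≤ r := by simp only [hm]; omega
        have hc2 : (m j:ℝ) ≤ (r:ℝ) - 2*j := by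
          have h' : (m j:ℝ) + 2*(j:ℝ) ≤ (r:ℝ) := by exact_mod_cast hc1
          linarith
        have hc3 : (2*(j:ℝ)) ≤ (r:ℝ) := by exact_mod_cast hc
        have hle : a j - π ≤ 0 := by
          rw [haj j]
          rw [div_sub' (ne_of_gt hr0)]
          apply div_nonpos_of_nonpos_of_nonneg _ hr0.le
          nlinarith
        rw [abs_of_nonpos hle]
        calc (m j:ℝ) * (π/r) ≤ ((r:ℝ) - 2*j) * (π/r) :=
              mul_le_mul_of_nonneg_right hc2 hπr.le
          _ = -(a j - π) := by rw [haj j]; field_simp; ring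
      · have hc1 : m j + r ≤ 2*j := by simp only [hm]; omega
        have hc2 : (m j:ℝ) ≤ 2*(j:ℝ) - r := by
          have h' : (m j:ℝ) + (r:ℝ) ≤ 2*(j:ℝ) := by exact_mod_cast hc1
          linarith
        have hc3 : (r:ℝ) ≤ 2*(j:ℝ) := by
          have : r ≤ 2*j := by omega
          exact_mod_cast this
        have hle : 0 ≤ a j - π := by
          rw [haj j]
          rw [div_sub' (ne_of_gt hr0)]
          apply div_nonneg _ hr0.le
          nlinarith
        rw [abs_of_nonneg hle]
        calc (m j:ℝ) * (π/r) ≤ (2*(j:ℝ) - r) * (π/r) :=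
              mul_le_mul_of_nonneg_right hc2 hπr.le
          _ = a j - π := by rw [haj j]; field_simp
    · have hc1 : m j + 2*j ≤ 2*r := by simp only [hm]; omega
      have hc2 : (m j:ℝ) ≤ 2*((r:ℝ) - j) := by
        have h' : (m j:ℝ) + 2*(j:ℝ) ≤ 2*(r:ℝ) := by exact_mod_cast hc1
        linarith
      calc (m j:ℝ) * (π/r) ≤ (2*((r:ℝ) - j)) * (π/r) :=
            mul_le_mul_of_nonneg_right hc2 hπr.le
        _ = 2*π - a j := by rw [haj j]; field_simp
  -- sin positivity at grid points
  have hsin_lb : ∀ j : ℕ, 1 ≤ j → j ≤ n → 2/π * ((m j:ℝ) * (π/r)) ≤ |Real.sin (a j)| := by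
    intro j h1 h2
    obtain ⟨hm1, hd1, hd2, hd3⟩ := key_dist j h1 h2
    exact sin_lb (by positivity) hd1 hd2 hd3
  have hsin_ne : ∀ j : ℕ, 1 ≤ j → j ≤ n → Real.sin (a j) ≠ 0 := by
    intro j h1 h2
    have hb := hsin_lb j h1 h2
    obtain ⟨hm1, -⟩ := key_dist j h1 h2
    have hm1' : (1:ℝ) ≤ (m j:ℝ) := by exact_mod_cast hm1
    have : (0:ℝ) < 2/π * ((m j:ℝ) * (π/r)) := by positivity
    intro hcon
    rw [hcon, abs_zero] at hb
    linarith
  -- Step 1 : product to sum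
  have hprod : Real.log (∏ j ∈ Finset.Icc 1 n, |2 * Real.sin (2*(j:ℝ)*π/r)|)
      = ∑ k ∈ Finset.range n, Real.log (2 * Real.sin (a (k+1))) := by
    rw [Real.log_prod]
    · have e1 : ∑ j ∈ Finset.Icc 1 n, Real.log |2 * Real.sin (2*(j:ℝ)*π/r)|
          = ∑ j ∈ Finset.Icc 1 n, Real.log (2 * Real.sin (a j)) := by
        apply Finset.sum_congr rfl
        intro j _
        rw [haj j, Real.log_abs]
      rw [e1, ← sum_range_Icc (fun j => Real.log (2 * Real.sin (a j))) n]
    · intro j hj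
      rw [Finset.mem_Icc] at hj
      rw [← haj j, abs_ne_zero]
      intro hcon
      apply hsin_ne j hj.1 hj.2
      have : (2:ℝ) ≠ 0 := two_ne_zero
      rcases mul_eq_zero.1 hcon with h' | h'
      · exact absurd h' this
      · exact h'
  -- Step 2 : lob rewrite
  have hlob : ((r:ℝ)/(2*π)) * lob (2*(n:ℝ)*π/r)
      = -((1/h) * ∫ t in (0:ℝ)..(a n), Real.log (2 * Real.sin t)) := by
    have e2 : ∫ t in (0:ℝ)..(a n), Real.log |2*Real.sin t|
        = ∫ t in (0:ℝ)..(a n), Real.log (2 * Real.sin t) :=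
      intervalIntegral.integral_congr (fun t _ => Real.log_abs _)
    rw [show (2*(n:ℝ)*π/r) = a n from (haj n).symm]
    rw [lob, e2]
    have e3 : (r:ℝ)/(2*π) = 1/h := by rw [hh, one_div_div]
    rw [e3]; ring
  -- Step 3 : integral splitting
  have hint_piece : ∀ k, k < n →
      IntervalIntegrable (fun t => Real.log (2 * Real.sin t)) volume (a k) (a (k+1)) := by
    intro k hk
    have h1 := hgrid k (by omega)
    have h2 := hgrid (k+1) (by omega)
    exact f_intble h1.1 h1.2 h2.1 h2.2
  have hsplit : ∫ t in (0:ℝ)..(a n), Real.log (2 * Real.sin t)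
      = ∑ k ∈ Finset.range n, ∫ t in a k..a (k+1), Real.log (2 * Real.sin t) := by
    rw [intervalIntegral.sum_integral_adjacent_intervals hint_piece]
    have : a 0 = 0 := by simp [ha]
    rw [this]
  -- Step 4 : reduce to sum of E
  set E : ℕ → ℝ := fun k =>
    |Real.log (2 * Real.sin (a (k+1))) - (1/h) * ∫ t in a k..a (k+1), Real.log (2 * Real.sin t)|
    with hE
  clear_value E
  have hreduce : |Real.log (∏ j ∈ Finset.Icc 1 n, |2 * Real.sin (2*(j:ℝ)*π/r)|)
      + ((r:ℝ)/(2*π)) * lob (2*(n:ℝ)*π/r)| ≤ ∑ k ∈ Finset.range n, E k := by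
    rw [hprod, hlob, hsplit]
    have e4 : ∑ k ∈ Finset.range n, Real.log (2 * Real.sin (a (k+1)))
        + -((1/h) * ∑ k ∈ Finset.range n, ∫ t in a k..a (k+1), Real.log (2 * Real.sin t))
        = ∑ k ∈ Finset.range n, (Real.log (2 * Real.sin (a (k+1)))
            - (1/h) * ∫ t in a k..a (k+1), Real.log (2 * Real.sin t)) := by
      rw [Finset.mul_sum, Finset.sum_sub_distrib]
      ring
    rw [e4]
    simp only [hE]
    exact Finset.abs_sum_le_sum_abs _ _
  -- Step 5a : case A bound
  have hcaseA : ∀ k, k < n → 3 ≤ m (k+1) → E k ≤ π * (1/((m (k+1):ℝ) - 2)) := by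
    intro k hk h3
    obtain ⟨hm1, hd1, hd2, hd3⟩ := key_dist (k+1) (by omega) (by omega)
    have hm3 : (3:ℝ) ≤ (m (k+1):ℝ) := by exact_mod_cast h3
    have hπr : (0:ℝ) < π/(r:ℝ) := by positivity
    have hdh : h < (m (k+1):ℝ)*(π/r) := by
      rw [hh]
      have : 2*π/(r:ℝ) = 2*(π/r) := by ring
      rw [this]
      nlinarith
    have est := caseA_est hh0 hdh hd1 hd2 hd3
    have ea : a (k+1) - h = a k := by simp only [ha]; push_cast; ring
    rw [ea] at est
    have e2 : π * h / (2*((m (k+1):ℝ)*(π/r) - h)) = π * (1/((m (k+1):ℝ) - 2)) := by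
      have e0 : (m (k+1):ℝ)*(π/(r:ℝ)) - h = ((m (k+1):ℝ) - 2)*(π/(r:ℝ)) := by
        rw [hh]; ring
      have hden : (0:ℝ) < ((m (k+1):ℝ)-2)*(π/(r:ℝ)) := mul_pos (by linarith) hπr
      have hden2 : (2*(((m (k+1):ℝ)-2)*(π/(r:ℝ)))) ≠ 0 := by linarith
      have hden3 : ((m (k+1):ℝ)-2) ≠ 0 := by linarith
      rw [e0, mul_one_div, div_eq_div_iff hden2 hden3, hh]
      ring
    rw [hE]
    rw [e2] at est
    exact est
  -- Step 5b : universal (case B) bound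
  have hcaseB : ∀ k, k < n → E k ≤ 100 * lr := by
    intro k hk
    obtain ⟨hm1, hd1, hd2, hd3⟩ := key_dist (k+1) (by omega) (by omega)
    have hm1' : (1:ℝ) ≤ (m (k+1):ℝ) := by exact_mod_cast hm1
    have hgk := hgrid k (by omega)
    have hgj := hgrid (k+1) (by omega)
    have hle : a k ≤ a (k+1) := by
      simp only [ha]
      have hcast : ((k:ℝ)) ≤ ((k+1:ℕ):ℝ) := by exact_mod_cast Nat.le_succ k
      exact mul_le_mul_of_nonneg_right hcast hh0.le
    have hlen : a (k+1) - a k = h := by simp only [ha]; push_cast; ring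
    -- |f (a (k+1))| ≤ lr
    have hb := hsin_lb (k+1) (by omega) (by omega)
    have h2s : 4/(r:ℝ) ≤ |2 * Real.sin (a (k+1))| := by
      rw [abs_mul, abs_of_nonneg (by norm_num : (0:ℝ) ≤ 2)]
      have e : 2/π * ((m (k+1):ℝ)*(π/r)) = 2*(m (k+1):ℝ)/r := by
        field_simp
      have e2 : 4/(r:ℝ) ≤ 2*(2*(m (k+1):ℝ)/r) := by
        rw [show 2*(2*(m (k+1):ℝ)/r) = 4*(m (k+1):ℝ)/r by ring]
        gcongr
        linarith
      rw [e] at hb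
      linarith
    have h2s2 : |2 * Real.sin (a (k+1))| ≤ (r:ℝ) := by
      rw [abs_mul, abs_of_nonneg (by norm_num : (0:ℝ) ≤ 2)]
      have hs1 : |Real.sin (a (k+1))| ≤ 1 := Real.abs_sin_le_one _
      linarith
    have h2s0 : (0:ℝ) < |2 * Real.sin (a (k+1))| := by
      have : (0:ℝ) < 4/(r:ℝ) := by positivity
      linarith
    have habsf : |Real.log (2 * Real.sin (a (k+1)))| ≤ lr := by
      rw [← Real.log_abs]
      rw [abs_le]
      constructor
      · have h4 : Real.log (4/(r:ℝ)) ≤ Real.log |2 * Real.sin (a (k+1))| :=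
          Real.log_le_log (by positivity) h2s
        have h5 : Real.log (4/(r:ℝ)) = Real.log 4 - lr := by
          rw [Real.log_div (by norm_num) (ne_of_gt hr0)]
        have h6 : (0:ℝ) ≤ Real.log 4 := Real.log_nonneg (by norm_num)
        linarith
      · exact Real.log_le_log h2s0 h2s2
    -- integral bound
    have hintf := hint_piece k hk
    have h5 : |∫ t in a k..a (k+1), Real.log (2 * Real.sin t)|
        ≤ ∫ t in a k..a (k+1), gdom t := by
      have n1 : ‖∫ t in a k..a (k+1), Real.log (2 * Real.sin t)‖
          ≤ ∫ t in a k..a (k+1), ‖Real.log (2 * Real.sin t)‖ :=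
        intervalIntegral.norm_integral_le_integral_norm hle
      have n2 : ∫ t in a k..a (k+1), ‖Real.log (2 * Real.sin t)‖
          ≤ ∫ t in a k..a (k+1), gdom t := by
        apply intervalIntegral.integral_mono_on hle hintf.norm (gdom_intble _ _)
        intro t ht
        rw [Real.norm_eq_abs]
        exact f_ptwise (hgk.1.trans ht.1) (ht.2.trans hgj.2)
      calc |∫ t in a k..a (k+1), Real.log (2 * Real.sin t)| ≤ _ := n1
        _ ≤ _ := n2
    have h6 := caseB_intbound hh0 hlen hgk.1 hgj.2
    have h7 := numericB hrr3 hh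
    have habstri : ∀ A B : ℝ, |A - B| ≤ |A| + |B| := by
      intro A B
      rw [sub_eq_add_neg]
      exact (abs_add_le _ _).trans (by rw [abs_neg])
    rw [hE]
    have step : |Real.log (2 * Real.sin (a (k+1)))
        - (1/h) * ∫ t in a k..a (k+1), Real.log (2 * Real.sin t)|
        ≤ lr + (1/h) * (h + 3*(h*Real.log (2*π)
          + 4*(min (2*h) 1)*(1 - Real.log (min (2*h) 1)) + 2*h*(1+|Real.log h|))) := by
      have t1 := habstri (Real.log (2 * Real.sin (a (k+1))))
        ((1/h) * ∫ t in a k..a (k+1), Real.log (2 * Real.sin t))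
      have t2 : |(1/h) * ∫ t in a k..a (k+1), Real.log (2 * Real.sin t)|
          = (1/h) * |∫ t in a k..a (k+1), Real.log (2 * Real.sin t)| := by
        rw [abs_mul, abs_of_nonneg (by positivity : (0:ℝ) ≤ 1/h)]
      have t3 : (1/h) * |∫ t in a k..a (k+1), Real.log (2 * Real.sin t)|
          ≤ (1/h) * (h + 3*(h*Real.log (2*π)
            + 4*(min (2*h) 1)*(1 - Real.log (min (2*h) 1)) + 2*h*(1+|Real.log h|))) := by
        apply mul_le_mul_of_nonneg_left _ (by positivity : (0:ℝ) ≤ 1/h)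
        exact h5.trans h6
      rw [t2] at t1
      linarith
    exact step.trans h7
  -- Step 6 : sum the bounds
  set Aset := (Finset.range n).filter (fun k => 3 ≤ m (k+1)) with hAset
  set Bset := (Finset.range n).filter (fun k => ¬ 3 ≤ m (k+1)) with hBset
  have hEsplit : ∑ k ∈ Finset.range n, E k = ∑ k ∈ Aset, E k + ∑ k ∈ Bset, E k :=
    (Finset.sum_filter_add_sum_filter_not _ _ _).symm
  -- B part
  have hBsub : Bset ⊆ ({0, kk - 1, kk, r - 2} : Finset ℕ) := by
    intro k hk
    simp only [hBset, Finset.mem_filter, Finset.mem_range] at hk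
    obtain ⟨hkn, hk3⟩ := hk
    have h2 : m (k+1) ≤ 2 := by omega
    simp only [hm] at h2
    simp only [Finset.mem_insert, Finset.mem_singleton]
    omega
  have hBcard : Bset.card ≤ 4 := by
    apply le_trans (Finset.card_le_card hBsub)
    have i1 := Finset.card_insert_le 0 ({kk - 1, kk, r - 2} : Finset ℕ)
    have i2 := Finset.card_insert_le (kk - 1) ({kk, r - 2} : Finset ℕ)
    have i3 := Finset.card_insert_le kk ({r - 2} : Finset ℕ)
    have i4 : ({r - 2} : Finset ℕ).card = 1 := Finset.card_singleton _
    omega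
  have hBsum : ∑ k ∈ Bset, E k ≤ 400 * lr := by
    have h1 : ∑ k ∈ Bset, E k ≤ Bset.card • (100 * lr) := by
      apply Finset.sum_le_card_nsmul
      intro k hk
      simp only [hBset, Finset.mem_filter, Finset.mem_range] at hk
      exact hcaseB k hk.1
    rw [nsmul_eq_mul] at h1
    have h2 : (Bset.card : ℝ) ≤ 4 := by exact_mod_cast hBcard
    nlinarith
  -- A part
  have hmem : ∀ k ∈ Aset, k < n ∧ 3 ≤ m (k+1) := by
    intro k hk
    simp only [hAset, Finset.mem_filter, Finset.mem_range] at hk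
    exact hk
  have hA1 : ∑ k ∈ Aset, E k ≤ π * ∑ k ∈ Aset, 1/((m (k+1):ℝ) - 2) := by
    rw [Finset.mul_sum]
    apply Finset.sum_le_sum
    intro k hk
    obtain ⟨h1, h2⟩ := hmem k hk
    exact hcaseA k h1 h2
  -- pointwise split into 3 reciprocals
  have hApt : ∀ k ∈ Aset, 1/((m (k+1):ℝ) - 2)
      ≤ 1/((2*(k+1):ℕ) - 2 : ℝ) + 1/(((max (r - 2*(k+1)) (2*(k+1) - r)):ℕ) - 2 : ℝ)
        + 1/(((2*(r - (k+1))):ℕ) - 2 : ℝ) := by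
    intro k hk
    obtain ⟨hkn, hk3⟩ := hmem k hk
    have hb1 : m (k+1) ≤ 2*(k+1) := by simp only [hm]; omega
    have hb2 : m (k+1) ≤ max (r - 2*(k+1)) (2*(k+1) - r) := by simp only [hm]; omega
    have hb3 : m (k+1) ≤ 2*(r - (k+1)) := by simp only [hm]; omega
    have key0 : ∀ c : ℕ, m (k+1) ≤ c → (0:ℝ) ≤ 1/((c:ℝ) - 2) := by
      intro c hc
      have h3' : (3:ℝ) ≤ (c:ℝ) := by exact_mod_cast le_trans hk3 hc
      have hpos : (0:ℝ) < (c:ℝ) - 2 := by linarith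
      positivity
    have k1 := key0 _ hb1
    have k2 := key0 _ hb2
    have k3 := key0 _ hb3
    have hcases : m (k+1) = 2*(k+1) ∨ m (k+1) = max (r - 2*(k+1)) (2*(k+1) - r)
        ∨ m (k+1) = 2*(r - (k+1)) := by simp only [hm]; omega
    rcases hcases with he | he | he <;> rw [he] <;> linarith
  -- sums over the three reciprocal families
  have hmem3 : ∀ j ∈ Aset, 3 ≤ m (j+1) ∧ j < n := by
    intro j hj
    exact ⟨(hmem j hj).2, (hmem j hj).1⟩
  have hS1 : ∑ k ∈ Aset, 1/(((2*(k+1):ℕ):ℝ) - 2) ≤ 1 + Real.log ((2*r:ℕ)) := by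
    apply sum_inv (K := 2*r)
    · intro x _ y _ hxy; omega
    · intro j hj
      have h1 := (hmem3 j hj).1
      simp only [hm] at h1
      omega
    · intro j hj
      have h2 := (hmem3 j hj).2
      omega
  have hS3 : ∑ k ∈ Aset, 1/(((2*(r - (k+1)):ℕ):ℝ) - 2) ≤ 1 + Real.log ((2*r:ℕ)) := by
    apply sum_inv (K := 2*r)
    · intro x hx y hy hxy
      have hx' := (hmem3 x hx).2
      have hy' := (hmem3 y hy).2
      omega
    · intro j hj
      have h1 := (hmem3 j hj).1
      simp only [hm] at h1
      omega
    · intro j hj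
      omega
  have hS2 : ∑ k ∈ Aset, 1/(((max (r - 2*(k+1)) (2*(k+1) - r):ℕ):ℝ) - 2)
      ≤ 2 * (1 + Real.log ((2*r:ℕ))) := by
    rw [← Finset.sum_filter_add_sum_filter_not Aset (fun k => 2*(k+1) < r)]
    have p1 : ∑ k ∈ Aset.filter (fun k => 2*(k+1) < r),
        1/(((max (r - 2*(k+1)) (2*(k+1) - r):ℕ):ℝ) - 2) ≤ 1 + Real.log ((2*r:ℕ)) := by
      apply sum_inv (K := 2*r)
      · intro x hx y hy hxy
        simp only [Finset.mem_filter] at hx hy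
        omega
      · intro j hj
        simp only [Finset.mem_filter] at hj
        have h1 := (hmem3 j hj.1).1
        simp only [hm] at h1
        omega
      · intro j hj
        simp only [Finset.mem_filter] at hj
        have h2 := (hmem3 j hj.1).2
        omega
    have p2 : ∑ k ∈ Aset.filter (fun k => ¬ 2*(k+1) < r),
        1/(((max (r - 2*(k+1)) (2*(k+1) - r):ℕ):ℝ) - 2) ≤ 1 + Real.log ((2*r:ℕ)) := by
      apply sum_inv (K := 2*r)
      · intro x hx y hy hxy
        simp only [Finset.mem_filter] at hx hy
        omega
      · intro j hj
        simp only [Finset.mem_filter] at hj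
        have h1 := (hmem3 j hj.1).1
        simp only [hm] at h1
        omega
      · intro j hj
        simp only [Finset.mem_filter] at hj
        have h2 := (hmem3 j hj.1).2
        omega
    linarith
  have hAsum2 : ∑ k ∈ Aset, 1/((m (k+1):ℝ) - 2) ≤ 4 * (1 + Real.log ((2*r:ℕ))) := by
    have hle := Finset.sum_le_sum hApt
    rw [Finset.sum_add_distrib, Finset.sum_add_distrib] at hle
    linarith
  have hlogK : Real.log (((2*r:ℕ)):ℝ) ≤ 1 + lr := by
    have e : (((2*r:ℕ)):ℝ) = 2 * (r:ℝ) := by push_cast; ring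
    rw [e, Real.log_mul two_ne_zero hr0.ne']
    have := Real.log_two_lt_d9
    rw [hlr]
    norm_num at this ⊢
    linarith
  have hAfinal : ∑ k ∈ Aset, E k ≤ 38 * lr := by
    have h1 : ∑ k ∈ Aset, 1/((m (k+1):ℝ) - 2) ≤ 12 * lr := by
      have : 1 + Real.log (((2*r:ℕ)):ℝ) ≤ 3 * lr := by linarith
      linarith
    have h2 : (0:ℝ) ≤ ∑ k ∈ Aset, 1/((m (k+1):ℝ) - 2) := by
      apply Finset.sum_nonneg
      intro k hk
      have h3 := (hmem3 k hk).1
      have h3' : (3:ℝ) ≤ (m (k+1):ℝ) := by exact_mod_cast h3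
      have : (0:ℝ) < (m (k+1):ℝ) - 2 := by linarith
      positivity
    calc ∑ k ∈ Aset, E k ≤ π * ∑ k ∈ Aset, 1/((m (k+1):ℝ) - 2) := hA1
      _ ≤ 3.15 * (12 * lr) := by nlinarith
      _ ≤ 38 * lr := by linarith
  calc |Real.log (∏ j ∈ Finset.Icc 1 n, |2 * Real.sin (2*(j:ℝ)*π/r)|)
      + ((r:ℝ)/(2*π)) * lob (2*(n:ℝ)*π/r)| ≤ ∑ k ∈ Finset.range n, E k := hreduce
    _ = ∑ k ∈ Aset, E k + ∑ k ∈ Bset, E k := hEsplit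
    _ ≤ 38 * lr + 400 * lr := by linarith
    _ ≤ 1000 * lr := by linarith
end

section
/- Define v(α,β,γ) = (1/2)(Λ(α+β+γ) - Λ(β+γ-α) - Λ(α+γ-β) - Λ(α+β-γ)) where Λ is the Lobachevsky function. Then the maximum of v over ℝ³ equals 2Λ(π/4) = v₈/4, where v₈ = 8Λ(π/4) is the volume of the regular ideal hyperbolic octahedron. -/
noncomputable def v (α β γ : ℝ) : ℝ :=
  (1 / 2) * (lob (α + β + γ) - lob (β + γ - α) - lob (α + γ - β) - lob (α + β - γ))

namespace Lob9

open Real MeasureTheory Set intervalIntegral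

noncomputable def F (t : ℝ) : ℝ := Real.log |2 * Real.sin t|

lemma lob_def (x : ℝ) : lob x = -∫ t in (0:ℝ)..x, F t := rfl

lemma F_neg (t : ℝ) : F (-t) = F t := by
  simp [F, Real.sin_neg, mul_neg, abs_neg]

lemma F_per : Function.Periodic F π := by
  intro t; simp [F, Real.sin_add_pi, mul_neg, abs_neg]

lemma F_int (x : ℝ) (k : ℤ) : F (x + k * π) = F x := (F_per.int_mul k) x

lemma meas_F : Measurable F :=
  Real.measurable_log.comp (continuous_abs.comp (continuous_const.mul Real.continuous_sin)).measurable

lemma ae_sin_ne : ∀ᵐ t : ℝ, Real.sin t ≠ 0 := by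
  rw [ae_iff]
  have hsub : {t : ℝ | ¬ Real.sin t ≠ 0} ⊆ Set.range (fun n : ℤ => (n : ℝ) * π) := by
    intro t ht
    simp only [Set.mem_setOf_eq, not_not] at ht
    obtain ⟨n, hn⟩ := Real.sin_eq_zero_iff.mp ht
    exact ⟨n, hn⟩
  exact measure_mono_null hsub ((Set.countable_range _).measure_zero _)

lemma ae_cos_ne : ∀ᵐ t : ℝ, Real.cos t ≠ 0 := by
  rw [ae_iff]
  have hsub : {t : ℝ | ¬ Real.cos t ≠ 0} ⊆ Set.range (fun n : ℤ => (2 * (n:ℝ) + 1) * π / 2) := by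
    intro t ht
    simp only [Set.mem_setOf_eq, not_not] at ht
    obtain ⟨n, hn⟩ := Real.cos_eq_zero_iff.mp ht
    exact ⟨n, by push_cast; linarith⟩
  exact measure_mono_null hsub ((Set.countable_range _).measure_zero _)

lemma intF_small : IntervalIntegrable F volume 0 (π/6) := by
  have hπ := Real.pi_pos
  have h06 : (0:ℝ) ≤ π/6 := by positivity
  have hint_g : IntervalIntegrable (fun t => -Real.log (4*t/π)) volume 0 (π/6) := by
    apply intervalIntegrable_deriv_of_nonneg
      (g := fun t => t - (π/4) * ((4*t/π) * Real.log (4*t/π)))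
    · exact (continuous_id.sub (continuous_const.mul
        (Real.continuous_mul_log.comp (by continuity)))).continuousOn
    · intro t ht
      rw [min_eq_left h06, max_eq_right h06] at ht
      have hu : (0:ℝ) < 4*t/π := div_pos (by linarith [ht.1]) hπ
      have h1 : HasDerivAt (fun t : ℝ => 4*t/π) (4/π) t := by
        simpa using ((hasDerivAt_id t).const_mul (4:ℝ)).div_const π
      have h2 := (Real.hasDerivAt_mul_log (ne_of_gt hu)).comp t h1
      have h3 := (hasDerivAt_id t).sub (h2.const_mul (π/4))
      have h3' : HasDerivAt (fun t => t - (π/4) * ((4*t/π) * Real.log (4*t/π)))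
          (1 - π / 4 * ((Real.log (4 * t / π) + 1) * (4 / π))) t := h3
      convert h3' using 1
      field_simp
      ring
    · intro t ht
      rw [min_eq_left h06, max_eq_right h06] at ht
      rw [neg_nonneg]
      apply Real.log_nonpos (div_nonneg (by linarith [ht.1]) hπ.le)
      rw [div_le_one hπ]
      linarith [ht.2]
  apply hint_g.mono_fun' (meas_F.aestronglyMeasurable.restrict)
  rw [Filter.EventuallyLE, uIoc_of_le h06]
  filter_upwards [ae_restrict_mem measurableSet_Ioc] with t ht
  have ht6 : t ≤ π/6 := ht.2
  have htπ : t < π := by linarith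
  have hs : 0 < Real.sin t := Real.sin_pos_of_pos_of_lt_pi ht.1 htπ
  have habs : |2 * Real.sin t| = 2 * Real.sin t := abs_of_pos (by linarith)
  have hsin_le : Real.sin t ≤ t := Real.sin_le ht.1.le
  have hsin_ge : 2/π * t ≤ Real.sin t := Real.mul_le_sin ht.1.le (by linarith)
  have harg : (0:ℝ) < 4*t/π := div_pos (by linarith [ht.1]) hπ
  show ‖F t‖ ≤ -Real.log (4*t/π)
  rw [Real.norm_eq_abs, F, habs]
  rw [abs_le]
  constructor
  · rw [neg_neg]
    apply (Real.log_le_log_iff harg (by linarith)).mpr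
    rw [div_le_iff₀ hπ]
    have h' : 2 * t ≤ Real.sin t * π := by
      have hh := mul_le_mul_of_nonneg_right hsin_ge Real.pi_pos.le
      calc 2*t = 2/π*t*π := by field_simp
      _ ≤ Real.sin t * π := hh
    linarith
  · have hprod : (2 * Real.sin t) * (4*t/π) ≤ 1 := by
      have e : (2 * Real.sin t) * (4*t/π) = 8*(Real.sin t * t)/π := by ring
      rw [e, div_le_one hπ]
      nlinarith [Real.pi_le_four, ht.1.le, mul_le_mul_of_nonneg_right hsin_le ht.1.le]
    have : Real.log (2 * Real.sin t) + Real.log (4*t/π) ≤ 0 := by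
      rw [← Real.log_mul (by linarith) (ne_of_gt harg)]
      exact Real.log_nonpos (mul_nonneg (by linarith) harg.le) hprod
    linarith

lemma intF_0pi : IntervalIntegrable F volume 0 π := by
  have hπ := Real.pi_pos
  have h2 : IntervalIntegrable F volume (π/6) (π - π/6) := by
    apply ContinuousOn.intervalIntegrable
    apply ContinuousOn.log
    · exact (continuous_abs.comp (continuous_const.mul Real.continuous_sin)).continuousOn
    · intro t ht
      rw [uIcc_of_le (by linarith)] at ht
      have : 0 < Real.sin t :=
        Real.sin_pos_of_pos_of_lt_pi (by linarith [ht.1]) (by linarith [ht.2])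
      show |2 * Real.sin t| ≠ 0
      intro hc
      rw [abs_eq_zero] at hc
      nlinarith
  have h3 : IntervalIntegrable F volume (π - π/6) π := by
    have h := intF_small.comp_sub_left π
    have he : (fun x => F (π - x)) = F := funext fun x => by
      simp [F, Real.sin_pi_sub]
    rw [he] at h
    simpa using h.symm
  exact (intF_small.trans h2).trans h3

lemma intF (a b : ℝ) : IntervalIntegrable F volume a b := by
  have hπ := Real.pi_pos
  have hstep : ∀ n : ℤ, IntervalIntegrable F volume ((n:ℝ)*π) ((n:ℝ)*π + π) := by
    intro n
    have h := intF_0pi.comp_add_right (-((n:ℝ)*π))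
    have he : (fun x : ℝ => F (x + -((n:ℝ)*π))) = F := funext fun x => by
      have := F_int x (-n)
      push_cast at this
      simpa [neg_mul] using this
    rw [he] at h
    have e1 : (0:ℝ) - -((n:ℝ)*π) = (n:ℝ)*π := by ring
    have e2 : π - -((n:ℝ)*π) = (n:ℝ)*π + π := by ring
    rwa [e1, e2] at h
  have hsym : ∀ N : ℕ, IntervalIntegrable F volume (-((N:ℝ)*π)) ((N:ℝ)*π) := by
    intro N
    induction N with
    | zero => simp
    | succ n ih =>
      have hleft : IntervalIntegrable F volume (-(((n:ℝ)+1)*π)) (-((n:ℝ)*π)) := by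
        have h := hstep (-(n+1))
        push_cast at h
        rwa [show (-((n:ℝ)+1)) * π = -(((n:ℝ)+1)*π) by ring,
             show -(((n:ℝ)+1)*π) + π = -((n:ℝ)*π) by ring] at h
      have hright : IntervalIntegrable F volume ((n:ℝ)*π) (((n:ℝ)+1)*π) := by
        have h := hstep n
        push_cast at h
        rwa [show (n:ℝ)*π + π = ((n:ℝ)+1)*π by ring] at h
      push_cast
      exact (hleft.trans ih).trans hright
  obtain ⟨N, hN⟩ := exists_nat_gt ((max |a| |b|) / π)
  have hN' : max |a| |b| ≤ (N:ℝ)*π := by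
    rw [div_lt_iff₀ hπ] at hN
    linarith
  apply (hsym N).mono_set'
  rw [uIoc, uIoc]
  have ha := abs_le.mp (le_trans (le_max_left |a| |b|) hN')
  have hb := abs_le.mp (le_trans (le_max_right |a| |b|) hN')
  have hN0 : (0:ℝ) ≤ (N:ℝ)*π := by positivity
  refine Set.Ioc_subset_Ioc (le_min ?_ ?_) (max_le ?_ ?_)
  · exact (min_le_left _ _).trans ha.1
  · exact (min_le_left _ _).trans hb.1
  · exact ha.2.trans (le_max_right _ _)
  · exact hb.2.trans (le_max_right _ _)

lemma lob_sub (x y : ℝ) : lob y - lob x = -∫ t in x..y, F t := by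
  rw [lob_def, lob_def]
  have := integral_interval_sub_left (intF 0 y) (intF 0 x)
  linarith

lemma int_zero_pi : ∫ t in (0:ℝ)..π, F t = 0 := by
  have hπ := Real.pi_pos
  have h2 : ∫ u in (0:ℝ)..(π/2), F (2*u) = ((2:ℝ))⁻¹ • ∫ x in (2*(0:ℝ))..(2*(π/2)), F x :=
    integral_comp_mul_left F two_ne_zero
  rw [show (2:ℝ)*0 = 0 by ring, show (2:ℝ)*(π/2) = π by ring, smul_eq_mul] at h2
  have h3 : ∫ u in (0:ℝ)..(π/2), F (2*u) = ∫ u in (0:ℝ)..(π/2), (F u + F (u + π/2)) := by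
    apply intervalIntegral.integral_congr_ae
    filter_upwards [ae_sin_ne, ae_cos_ne] with u hs hc _
    have hmul : 2 * Real.sin (2*u) = (2 * Real.sin u) * (2 * Real.cos u) := by
      rw [Real.sin_two_mul]; ring
    have : F (2*u) = Real.log (|2 * Real.sin u| * |2 * Real.cos u|) := by
      rw [F, hmul, abs_mul]
    rw [this, Real.log_mul (abs_ne_zero.mpr (mul_ne_zero two_ne_zero hs))
      (abs_ne_zero.mpr (mul_ne_zero two_ne_zero hc))]
    have e : F (u + π/2) = Real.log |2 * Real.cos u| := by
      rw [F, Real.sin_add_pi_div_two]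
    rw [F, e]
  have hi2 : IntervalIntegrable (fun u => F (u + π/2)) volume 0 (π/2) := by
    have h := (intF (π/2) π).comp_add_right (π/2)
    have e1 : π/2 - π/2 = (0:ℝ) := by ring
    have e2 : π - π/2 = π/2 := by ring
    rwa [e1, e2] at h
  have h4 : ∫ u in (0:ℝ)..(π/2), (F u + F (u + π/2)) =
      (∫ u in (0:ℝ)..(π/2), F u) + ∫ u in (0:ℝ)..(π/2), F (u + π/2) :=
    integral_add (intF 0 (π/2)) hi2
  have h5 : ∫ u in (0:ℝ)..(π/2), F (u + π/2) = ∫ x in (0 + π/2)..(π/2 + π/2), F x :=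
    integral_comp_add_right F (π/2)
  rw [show (0:ℝ) + π/2 = π/2 by ring, show π/2 + π/2 = π by ring] at h5
  have h6 : (∫ u in (0:ℝ)..(π/2), F u) + ∫ u in (π/2:ℝ)..π, F u = ∫ t in (0:ℝ)..π, F t :=
    integral_add_adjacent_intervals (intF 0 (π/2)) (intF (π/2) π)
  linarith

lemma lob_add_int (x : ℝ) (k : ℤ) : lob (x + k * π) = lob x := by
  have hsplit : ∫ t in (0:ℝ)..(x + k*π), F t
      = (∫ t in (0:ℝ)..x, F t) + ∫ t in x..(x + (k:ℝ)*π), F t :=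
    (integral_add_adjacent_intervals (intF 0 x) (intF x _)).symm
  have hper : ∫ t in x..(x + k • π), F t = k • ∫ t in x..(x+π), F t :=
    F_per.intervalIntegral_add_zsmul_eq k x intF
  have hone : ∫ t in x..(x+π), F t = ∫ t in (0:ℝ)..(0+π), F t :=
    F_per.intervalIntegral_add_eq x 0
  rw [zsmul_eq_mul] at hper
  rw [zero_add] at hone
  rw [lob_def, lob_def, hsplit, hper, hone, int_zero_pi]
  simp

lemma lob_neg (x : ℝ) : lob (-x) = -lob x := by
  have h1 : ∫ t in (0:ℝ)..x, F (-t) = ∫ t in (-x)..(0:ℝ), F t := by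
    simpa using integral_comp_neg (a := (0:ℝ)) (b := x) (f := F)
  have h2 : ∫ t in (0:ℝ)..x, F (-t) = ∫ t in (0:ℝ)..x, F t := by
    simp only [F_neg]
  rw [lob_def, lob_def, ← h2, h1, ← integral_symm]
  simp

lemma pair_mono {c x y : ℝ} (hxy : x ≤ y)
    (h : ∀ t ∈ Icc x y, Real.sin t ^ 2 ≤ Real.sin (c - t) ^ 2) :
    lob x + lob (c - x) ≤ lob y + lob (c - y) := by
  have hi1 : IntervalIntegrable F volume x y := intF x y
  have hi2 : IntervalIntegrable (fun t => F (c - t)) volume x y := by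
    have h := (intF (c-y) (c-x)).comp_sub_left c
    have e1 : c - (c - y) = y := by ring
    have e2 : c - (c - x) = x := by ring
    rw [e1, e2] at h
    exact h.symm
  have key : (lob y + lob (c - y)) - (lob x + lob (c - x))
      = ∫ t in x..y, (F (c - t) - F t) := by
    rw [integral_sub hi2 hi1]
    have e1 := lob_sub x y
    have e2 : lob (c - y) - lob (c - x) = ∫ t in x..y, F (c - t) := by
      have h3 := lob_sub (c - x) (c - y)
      have h4 : ∫ t in x..y, F (c - t) = ∫ t in (c-y)..(c-x), F t :=
        integral_comp_sub_left F c
      rw [h4, integral_symm] at *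
      linarith [lob_sub (c-x) (c-y), integral_symm (c-y) (c-x) (f := F) (μ := volume)]
    linarith
  have pos : 0 ≤ ∫ t in x..y, (F (c - t) - F t) := by
    apply integral_nonneg_of_ae_restrict hxy
    filter_upwards [ae_restrict_mem measurableSet_Icc, ae_restrict_of_ae ae_sin_ne] with t ht hs
    have h2 := h t ht
    have habs : |Real.sin t| ≤ |Real.sin (c - t)| := by
      have := Real.sqrt_le_sqrt h2
      rwa [Real.sqrt_sq_eq_abs, Real.sqrt_sq_eq_abs] at this
    have h0 : 0 < |2 * Real.sin t| := abs_pos.mpr (mul_ne_zero two_ne_zero hs)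
    have hle : |2 * Real.sin t| ≤ |2 * Real.sin (c - t)| := by
      rw [abs_mul, abs_mul]
      exact mul_le_mul_of_nonneg_left habs (abs_nonneg 2)
    have := (Real.log_le_log_iff h0 (lt_of_lt_of_le h0 hle)).mpr hle
    simp only [Pi.zero_apply, F]
    linarith
  linarith

lemma sin_sq_sub (a b : ℝ) :
    Real.sin a ^ 2 - Real.sin b ^ 2 = Real.sin (a+b) * Real.sin (a-b) := by
  rw [Real.sin_add, Real.sin_sub]
  nlinarith [Real.sin_sq_add_cos_sq a, Real.sin_sq_add_cos_sq b]

lemma half_max {s x : ℝ} (hs : 0 ≤ Real.sin s) (h1 : s/2 - π/2 ≤ x) (h2 : x ≤ s/2) :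
    lob x + lob (s - x) ≤ 2 * lob (s/2) := by
  have h := pair_mono (c := s) h2 (fun t ht => by
    have hpos : 0 ≤ Real.sin (s - 2*t) :=
      Real.sin_nonneg_of_nonneg_of_le_pi (by linarith [ht.2]) (by linarith [ht.1])
    have hid := sin_sq_sub (s - t) t
    rw [show (s-t)+t = s by ring, show (s-t)-t = s-2*t by ring] at hid
    nlinarith [mul_nonneg hs hpos])
  have e : s - s/2 = s/2 := by ring
  rw [e] at h
  linarith

lemma sin_case {s : ℝ} (hs : 0 ≤ Real.sin s) (x : ℝ) :
    lob x + lob (s - x) ≤ 2 * lob (s/2) := by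
  have hmem := toIcoMod_mem_Ico Real.pi_pos (s/2 - π/2) x
  have hsub := self_sub_toIcoMod Real.pi_pos (s/2 - π/2) x
  rw [zsmul_eq_mul] at hsub
  generalize hx'def : toIcoMod Real.pi_pos (s/2 - π/2) x = x' at hmem hsub
  generalize hkdef : toIcoDiv Real.pi_pos (s/2 - π/2) x = k at hsub
  have hxx' : x = x' + (k:ℝ) * π := by linarith
  have hl1 : lob x = lob x' := by rw [hxx', lob_add_int]
  have hl2 : lob (s - x) = lob (s - x') := by
    rw [hxx', show s - (x' + (k:ℝ)*π) = (s - x') + ((-k : ℤ):ℝ) * π by push_cast; ring,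
      lob_add_int]
  rw [hl1, hl2]
  have hIco1 : s/2 - π/2 ≤ x' := hmem.1
  have hIco2 : x' < s/2 - π/2 + π := hmem.2
  rcases le_total x' (s/2) with hc | hc
  · exact half_max hs hIco1 hc
  · have h1 : s/2 - π/2 ≤ s - x' := by linarith
    have h2 : s - x' ≤ s/2 := by linarith
    have h := half_max hs h1 h2
    rw [show s - (s - x') = x' by ring] at h
    linarith

lemma pair_le (x y : ℝ) :
    lob x + lob y ≤ 2 * max (lob ((x+y)/2)) (lob ((x+y)/2 + π/2)) := by
  rcases le_total 0 (Real.sin (x+y)) with hs | hs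
  · have h := sin_case (s := x + y) hs x
    rw [show x + y - x = y by ring] at h
    have := le_max_left (lob ((x+y)/2)) (lob ((x+y)/2 + π/2))
    linarith
  · have hs' : 0 ≤ Real.sin (x + y + π) := by rw [Real.sin_add_pi]; linarith
    have h := sin_case (s := x + y + π) hs' x
    have e2 : lob (x + y + π - x) = lob y := by
      rw [show x + y + π - x = y + ((1:ℤ):ℝ)*π by push_cast; ring, lob_add_int]
    have e3 : lob ((x + y + π)/2) = lob ((x+y)/2 + π/2) := by
      congr 1; ring
    rw [e2, e3] at h
    have := le_max_right (lob ((x+y)/2)) (lob ((x+y)/2 + π/2))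
    linarith

lemma integral_F_le {a b c : ℝ} (hab : a ≤ b)
    (h : ∀ t ∈ Icc a b, Real.sin t ≠ 0 → F t ≤ c) :
    ∫ t in a..b, F t ≤ (b - a) * c := by
  have h0 : 0 ≤ ∫ t in a..b, (c - F t) := by
    apply integral_nonneg_of_ae_restrict hab
    filter_upwards [ae_restrict_mem measurableSet_Icc, ae_restrict_of_ae ae_sin_ne] with t ht hs
    simp only [Pi.zero_apply]
    linarith [h t ht hs]
  have h1 : ∫ t in a..b, (c - F t) = (b - a) * c - ∫ t in a..b, F t := by
    rw [integral_sub intervalIntegrable_const (intF a b), intervalIntegral.integral_const, smul_eq_mul]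
  linarith

lemma lob_pi4_nonneg : 0 ≤ lob (π/4) := by
  have hπ := Real.pi_pos
  have hπ4 := Real.pi_le_four
  have hb1 : ∫ t in (0:ℝ)..(π/12), F t ≤ (π/12 - 0) * Real.log (π/6) := by
    apply integral_F_le (by positivity)
    intro t ht hs
    have hsp : 0 < Real.sin t := lt_of_le_of_ne
      (Real.sin_nonneg_of_nonneg_of_le_pi ht.1 (by linarith [ht.2])) (Ne.symm hs)
    rw [F, abs_of_pos (by positivity)]
    apply (Real.log_le_log_iff (by positivity) (by positivity)).mpr
    have := Real.sin_le ht.1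
    linarith [ht.2]
  have hb2 : ∫ t in (π/12:ℝ)..(π/6), F t ≤ (π/6 - π/12) * 0 := by
    apply integral_F_le (by linarith)
    intro t ht hs
    have hsp : 0 ≤ Real.sin t :=
      Real.sin_nonneg_of_nonneg_of_le_pi (by linarith [ht.1]) (by linarith [ht.2])
    rw [F, abs_of_nonneg (by positivity)]
    apply Real.log_nonpos (by positivity)
    have hmono : Real.sin t ≤ Real.sin (π/6) := by
      apply Real.strictMonoOn_sin.monotoneOn ?_ ?_ ht.2
      · constructor <;> [linarith [ht.1]; linarith [ht.2]]
      · constructor <;> linarith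
    rw [Real.sin_pi_div_six] at hmono
    linarith
  have hb3 : ∫ t in (π/6:ℝ)..(π/4), F t ≤ (π/4 - π/6) * Real.log (Real.sqrt 2) := by
    apply integral_F_le (by linarith)
    intro t ht hs
    have hsp : 0 ≤ Real.sin t :=
      Real.sin_nonneg_of_nonneg_of_le_pi (by linarith [ht.1]) (by linarith [ht.2])
    rw [F, abs_of_nonneg (by positivity)]
    have hsp' : 0 < Real.sin t := lt_of_le_of_ne hsp (Ne.symm hs)
    apply (Real.log_le_log_iff (by positivity) (by positivity)).mpr
    have hmono : Real.sin t ≤ Real.sin (π/4) := by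
      apply Real.strictMonoOn_sin.monotoneOn ?_ ?_ ht.2
      · constructor <;> [linarith [ht.1]; linarith [ht.2]]
      · constructor <;> linarith
    rw [Real.sin_pi_div_four] at hmono
    linarith
  have hsum1 : (∫ t in (0:ℝ)..(π/12), F t) + ∫ t in (π/12:ℝ)..(π/6), F t
      = ∫ t in (0:ℝ)..(π/6), F t :=
    integral_add_adjacent_intervals (intF 0 (π/12)) (intF (π/12) (π/6))
  have hsum2 : (∫ t in (0:ℝ)..(π/6), F t) + ∫ t in (π/6:ℝ)..(π/4), F t
      = ∫ t in (0:ℝ)..(π/4), F t :=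
    integral_add_adjacent_intervals (intF 0 (π/6)) (intF (π/6) (π/4))
  have hsqrt2 : Real.sqrt 2 ≤ 3/2 := by
    nlinarith [Real.sq_sqrt (by norm_num : (0:ℝ) ≤ 2), Real.sqrt_nonneg 2]
  have hsqrt2' : 0 < Real.sqrt 2 := Real.sqrt_pos.mpr (by norm_num)
  have hlogsum : Real.log (π/6) + Real.log (Real.sqrt 2) = Real.log (π/6 * Real.sqrt 2) :=
    (Real.log_mul (by positivity) (by positivity)).symm
  have hlogneg : Real.log (π/6 * Real.sqrt 2) ≤ 0 := by
    apply Real.log_nonpos (by positivity)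
    nlinarith
  rw [lob_def]
  rw [neg_nonneg]
  have : ∫ t in (0:ℝ)..(π/4), F t ≤ (π/12) * (Real.log (π/6) + Real.log (Real.sqrt 2)) := by
    have e1 : (π/12 - 0) = π/12 := by ring
    have e2 : π/4 - π/6 = π/12 := by ring
    rw [e1] at hb1; rw [e2] at hb3
    nlinarith [hb1, hb2, hb3]
  rw [hlogsum] at this
  nlinarith

lemma sum_le {p q r w : ℝ} (h : p + q + r + w = 0) :
    lob p + lob q + lob r + lob w ≤ 4 * lob (π/4) := by
  set s := p + q with hs
  have hrw : r + w = -s := by rw [hs]; linarith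
  have h1 := pair_le p q
  have h2 := pair_le r w
  have e1 : lob ((r+w)/2) = - lob (s/2) := by
    rw [hrw, show (-s)/2 = -(s/2) by ring, lob_neg]
  have e2 : lob ((r+w)/2 + π/2) = - lob (s/2 + π/2) := by
    rw [hrw, show (-s)/2 + π/2 = -(s/2 + π/2) + ((1:ℤ):ℝ)*π by push_cast; ring,
      lob_add_int, lob_neg]
  rw [e1, e2] at h2
  set A := lob (s/2) with hA
  set B := lob (s/2 + π/2) with hB
  have hL : 0 ≤ lob (π/4) := lob_pi4_nonneg
  have hfin : max A B + max (-A) (-B) ≤ 2 * lob (π/4) := by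
    rcases le_total A B with hAB | hAB
    · rw [max_eq_right hAB, max_eq_left (neg_le_neg hAB)]
      have h3 := pair_le (s/2 + π/2) (-(s/2))
      rw [lob_neg] at h3
      have e3 : (s/2 + π/2 + -(s/2))/2 = π/4 := by ring
      have e4 : lob ((s/2 + π/2 + -(s/2))/2 + π/2) = - lob (π/4) := by
        rw [show (s/2 + π/2 + -(s/2))/2 + π/2 = -(π/4) + ((1:ℤ):ℝ)*π by push_cast; ring,
          lob_add_int, lob_neg]
      rw [e4, e3] at h3
      rw [max_eq_left (by linarith)] at h3
      rw [← hA, ← hB] at h3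
      linarith
    · rw [max_eq_left hAB, max_eq_right (neg_le_neg hAB)]
      have h3 := pair_le (s/2) (-(s/2 + π/2))
      rw [lob_neg] at h3
      have e3 : (s/2 + -(s/2 + π/2))/2 = -(π/4) := by ring
      have e4 : lob ((s/2 + -(s/2 + π/2))/2) = - lob (π/4) := by
        rw [e3, lob_neg]
      have e5 : (s/2 + -(s/2 + π/2))/2 + π/2 = π/4 := by ring
      rw [e4, e5] at h3
      rw [max_eq_right (by linarith)] at h3
      rw [← hA, ← hB] at h3
      linarith
  linarith

end Lob9

theorem stmt_9 :
    IsGreatest {y : ℝ | ∃ α β γ : ℝ, y = v α β γ} (2 * lob (Real.pi / 4)) ∧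
    2 * lob (Real.pi / 4) = (8 * lob (Real.pi / 4)) / 4 := by
  open Real Lob9 in
  refine ⟨⟨⟨3*π/4, π/4, π/4, ?_⟩, ?_⟩, by ring⟩
  · have hA : lob (3*π/4 + π/4 + π/4) = lob (π/4) := by
      rw [show 3*π/4 + π/4 + π/4 = π/4 + ((1:ℤ):ℝ)*π by push_cast; ring, lob_add_int]
    have hB : lob (π/4 + π/4 - 3*π/4) = -lob (π/4) := by
      rw [show π/4 + π/4 - 3*π/4 = -(π/4) by ring, lob_neg]
    have hC : lob (3*π/4 + π/4 - π/4) = -lob (π/4) := by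
      rw [show 3*π/4 + π/4 - π/4 = -(π/4) + ((1:ℤ):ℝ)*π by push_cast; ring,
        lob_add_int, lob_neg]
    unfold v
    rw [hA, hB, hC]
    ring
  · rintro y ⟨α, β, γ, rfl⟩
    have h := sum_le (p := α+β+γ) (q := -(β+γ-α)) (r := -(α+γ-β)) (w := -(α+β-γ)) (by ring)
    rw [lob_neg, lob_neg, lob_neg] at h
    unfold v
    linarith
end

section
/- For all real α, β, γ, one has v(α,β,γ) ≤ v₈/4, where v(α,β,γ) = (1/2)(Λ(α+β+γ) - Λ(β+γ-α) - Λ(α+γ-β) - Λ(α+β-γ)), Λ is the Lobachevsky function, and v₈ = 8Λ(π/4). -/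
open Real MeasureTheory Set intervalIntegral

namespace LobAux

noncomputable def ell (t : ℝ) : ℝ := Real.log |2 * Real.sin t|

lemma ell_periodic : Function.Periodic ell π := by
  intro x
  simp [ell, Real.sin_add_pi, abs_mul]

lemma ell_even (t : ℝ) : ell (-t) = ell t := by
  simp [ell, abs_mul]

lemma ell_meas : Measurable ell :=
  Real.measurable_log.comp ((continuous_abs.comp (by continuity)).measurable)

lemma ell_intable_base : IntervalIntegrable ell volume 0 (π/2) := by
  have hg : IntervalIntegrable (fun t : ℝ => Real.log 2 + (2 * t ^ (-1/2 : ℝ) + t)) volume 0 (π/2) := by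
    apply IntervalIntegrable.add
    · exact intervalIntegrable_const
    · exact ((intervalIntegrable_rpow' (by norm_num)).const_mul 2).add
        (intervalIntegral.intervalIntegrable_id)
  refine hg.mono_fun ell_meas.aestronglyMeasurable ?_
  have h2 : (0:ℝ) ≤ π/2 := by positivity
  rw [Set.uIoc_of_le h2]
  filter_upwards [ae_restrict_mem measurableSet_Ioc] with t ht
  obtain ⟨ht0, htp⟩ := ht
  have hsin : t / 2 ≤ Real.sin t := by
    have h1 : (1:ℝ)/2 ≤ 2/π := by
      rw [div_le_div_iff₀ two_pos Real.pi_pos]; nlinarith [Real.pi_le_four]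
    have h2 := Real.mul_le_sin ht0.le htp
    nlinarith
  have hsinpos : 0 < Real.sin t := lt_of_lt_of_le (by positivity) hsin
  have habs : |2 * Real.sin t| = 2 * Real.sin t := abs_of_pos (by positivity)
  have hub : ell t ≤ Real.log 2 := by
    rw [ell, habs]
    exact Real.log_le_log (by positivity) (by nlinarith [Real.sin_le_one t])
  have hlb : Real.log t ≤ ell t := by
    rw [ell, habs]
    exact Real.log_le_log ht0 (by nlinarith)
  have hrnn : (0:ℝ) ≤ t ^ (-1/2:ℝ) := Real.rpow_nonneg ht0.le _
  have hlogt : |Real.log t| ≤ 2 * t ^ (-1/2 : ℝ) + t := by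
    rcases le_total 1 t with h1 | h1
    · rw [abs_of_nonneg (Real.log_nonneg h1)]
      nlinarith [Real.log_le_sub_one_of_pos (show (0:ℝ) < t by linarith)]
    · have hlt : Real.log t ≤ 0 := Real.log_nonpos ht0.le h1
      rw [abs_of_nonpos hlt]
      have h3 : Real.log (t ^ (-1/2 : ℝ)) ≤ t ^ (-1/2 : ℝ) - 1 :=
        Real.log_le_sub_one_of_pos (Real.rpow_pos_of_pos ht0 _)
      rw [Real.log_rpow ht0] at h3
      nlinarith
  have h2l : (0:ℝ) ≤ Real.log 2 := Real.log_nonneg (by norm_num)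
  have hgpos : (0:ℝ) ≤ Real.log 2 + (2 * t ^ (-1/2:ℝ) + t) := by linarith
  rw [Real.norm_eq_abs, Real.norm_eq_abs, abs_of_nonneg hgpos, abs_le]
  rcases abs_le.1 hlogt with ⟨hl1, hl2⟩
  exact ⟨by linarith, by linarith⟩

lemma ell_intable (a b : ℝ) : IntervalIntegrable ell volume a b := by
  -- first: base on [-π/2, π/2]
  have hbase : IntervalIntegrable ell volume (-(π/2)) (π/2) := by
    have hneg : IntervalIntegrable ell volume (-(π/2)) 0 := by
      have := ell_intable_base
      rw [IntervalIntegrable.iff_comp_neg] at this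
      simpa [ell_even, neg_zero] using this.symm
    exact hneg.trans ell_intable_base
  -- shift invariance
  have hshift : ∀ (k : ℤ) (u v : ℝ), IntervalIntegrable ell volume u v →
      IntervalIntegrable ell volume (u + k * π) (v + k * π) := by
    intro k u v h
    have h2 := h.comp_sub_right (k * π)
    have : (fun x => ell (x - k * π)) = ell := by
      funext x
      have := (ell_periodic.int_mul k).sub_eq x
      simpa using this
    rwa [this] at h2
  have hstep : ∀ n : ℕ, IntervalIntegrable ell volume (-(π/2) - n * π) (π/2 + n * π) := by
    intro n
    induction n with
    | zero => simpa using hbase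
    | succ m ih =>
      have hr : IntervalIntegrable ell volume (π/2 + m * π) (π/2 + (m+1) * π) := by
        have := hshift (m+1) (-(π/2)) (π/2) hbase
        have e1 : -(π/2) + (m+1 : ℤ) * π = π/2 + m * π := by push_cast; ring
        have e2 : (π/2) + (m+1 : ℤ) * π = π/2 + (m+1) * π := by push_cast; ring
        rwa [e1, e2] at this
      have hl : IntervalIntegrable ell volume (-(π/2) - (m+1) * π) (-(π/2) - m * π) := by
        have := hshift (-(m+1)) (-(π/2)) (π/2) hbase
        have e1 : -(π/2) + (-(m+1) : ℤ) * π = -(π/2) - (m+1) * π := by push_cast; ring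
        have e2 : (π/2) + (-(m+1) : ℤ) * π = -(π/2) - m * π := by push_cast; ring
        rwa [e1, e2] at this
      have := hl.trans (ih.trans hr)
      push_cast
      convert this using 2 <;> push_cast <;> ring
  -- conclude
  obtain ⟨n, hn⟩ : ∃ n : ℕ, |a| + |b| ≤ n * π := by
    refine ⟨⌈(|a|+|b|)/π⌉₊, ?_⟩
    have h1 := Nat.le_ceil ((|a|+|b|)/π)
    rw [div_le_iff₀ Real.pi_pos] at h1
    linarith
  refine (hstep n).mono_set ?_
  have hc : -(π/2) - n * π ≤ π/2 + n * π := by nlinarith [Real.pi_pos, abs_nonneg a, abs_nonneg b]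
  have hmem : ∀ x : ℝ, |x| ≤ |a| + |b| → x ∈ Set.uIcc (-(π/2) - n * π) (π/2 + n * π) := by
    intro x hx
    rw [Set.uIcc_of_le hc]
    rcases abs_le.1 hx with ⟨h1, h2⟩
    constructor <;> nlinarith [Real.pi_pos]
  exact Set.uIcc_subset_uIcc (hmem a (by nlinarith [abs_nonneg b])) (hmem b (by nlinarith [abs_nonneg a]))


lemma lob_eq (x : ℝ) : lob x = -∫ t in (0:ℝ)..x, ell t := rfl

lemma lob_sub (x y : ℝ) : lob y - lob x = -∫ t in x..y, ell t := by
  rw [lob_eq, lob_eq, ← intervalIntegral.integral_add_adjacent_intervals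
    (ell_intable 0 x) (ell_intable x y)]
  ring

lemma lob_odd (x : ℝ) : lob (-x) = -lob x := by
  have h : ∫ t in (0:ℝ)..x, ell t = ∫ t in (-x)..(0:ℝ), ell t := by
    have h2 := intervalIntegral.integral_comp_neg (a := (0:ℝ)) (b := x) ell
    simp only [ell_even, neg_zero] at h2
    simpa using h2
  rw [lob_eq, lob_eq, intervalIntegral.integral_symm, ← h]

lemma ae_ne (c : ℝ) : ∀ᵐ x : ℝ, x ≠ c := by
  have : ∀ᵐ x : ℝ, x ∈ ({c} : Set ℝ)ᶜ :=
    MeasureTheory.compl_mem_ae_iff.2 (Real.volume_singleton)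
  filter_upwards [this] with x hx
  simpa using hx

lemma integral_ell_half : ∫ t in (0:ℝ)..(π/2), ell t = 0 := by
  set I := ∫ t in (0:ℝ)..(π/2), ell t with hI
  have e1 : π/2 - π/2 = (0:ℝ) := by ring
  have e2 : π/2 - (0:ℝ) = π/2 := by ring
  have hJI : ∫ t in (0:ℝ)..(π/2), ell (π/2 - t) = I := by
    rw [intervalIntegral.integral_comp_sub_left ell (π/2), e1, e2]
  have hI2' : ∫ t in (π/2)..π, ell t = I := by
    have h3 : ∫ t in (0:ℝ)..(π/2), ell (π - t) = ∫ t in (π/2)..π, ell t := by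
      rw [intervalIntegral.integral_comp_sub_left ell π,
        (by ring : π - π/2 = π/2), (by ring : π - (0:ℝ) = π)]
    rw [← h3]
    have hell_refl : ∀ t, ell (π - t) = ell t := fun t => by
      rw [ell, ell, Real.sin_pi_sub]
    simp only [hell_refl]
    exact hI.symm
  have hdouble : ∫ t in (0:ℝ)..(π/2), ell (2 * t) = (1/2) * (I + I) := by
    rw [intervalIntegral.integral_comp_mul_left ell (by norm_num : (2:ℝ) ≠ 0),
      (by ring : 2 * (π/2) = π), (by ring : 2 * (0:ℝ) = 0),
      ← intervalIntegral.integral_add_adjacent_intervals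
        (ell_intable 0 (π/2)) (ell_intable (π/2) π), hI2']
    rw [smul_eq_mul, ← hI]
    ring
  have hJint : IntervalIntegrable (fun t => ell (π/2 - t)) volume 0 (π/2) := by
    have h := ((ell_intable 0 (π/2)).comp_sub_left (π/2)).symm
    rwa [e1, e2] at h
  have hsum : ∫ t in (0:ℝ)..(π/2), (ell t + ell (π/2 - t)) = I + I := by
    rw [intervalIntegral.integral_add (ell_intable 0 (π/2)) hJint, hJI]
  have hptwise : ∫ t in (0:ℝ)..(π/2), (ell t + ell (π/2 - t)) =
      ∫ t in (0:ℝ)..(π/2), ell (2 * t) := by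
    apply intervalIntegral.integral_congr_ae
    have hple : (0:ℝ) ≤ π/2 := by positivity
    filter_upwards [ae_ne (π/2)] with t htp ht
    rw [Set.uIoc_of_le hple] at ht
    have htlt : t < π/2 := lt_of_le_of_ne ht.2 htp
    have hs : 0 < Real.sin t :=
      Real.sin_pos_of_pos_of_lt_pi ht.1 (by linarith [Real.pi_pos])
    have hc : 0 < Real.cos t := Real.cos_pos_of_mem_Ioo
      ⟨by nlinarith [Real.pi_pos, ht.1], htlt⟩
    have hs2 : 0 < Real.sin (2 * t) := by
      rw [Real.sin_two_mul]; positivity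
    rw [ell, ell, ell, Real.sin_pi_div_two_sub,
      abs_of_pos (by positivity), abs_of_pos (by positivity), abs_of_pos (by positivity),
      ← Real.log_mul (by positivity) (by positivity), Real.sin_two_mul]
    congr 1
    ring
  have hfin := hsum.symm.trans (hptwise.trans hdouble)
  linarith

lemma lob_pi_half : lob (π/2) = 0 := by
  rw [lob_eq, integral_ell_half, neg_zero]

lemma integral_ell_upper : ∫ t in (π/2)..π, ell t = ∫ t in (0:ℝ)..(π/2), ell t := by
  have h3 : ∫ t in (0:ℝ)..(π/2), ell (π - t) = ∫ t in (π/2)..π, ell t := by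
    rw [intervalIntegral.integral_comp_sub_left ell π,
      (by ring : π - π/2 = π/2), (by ring : π - (0:ℝ) = π)]
  rw [← h3]
  have hell_refl : ∀ t, ell (π - t) = ell t := fun t => by
    rw [ell, ell, Real.sin_pi_sub]
  simp only [hell_refl]

lemma integral_ell_pi : ∫ t in (0:ℝ)..π, ell t = 0 := by
  rw [← intervalIntegral.integral_add_adjacent_intervals
    (ell_intable 0 (π/2)) (ell_intable (π/2) π), integral_ell_upper, integral_ell_half]
  norm_num

lemma lob_periodic : Function.Periodic lob π := by
  intro x
  have h := lob_sub x (x + π)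
  have h2 := ell_periodic.intervalIntegral_add_eq x 0
  rw [h2, zero_add, integral_ell_pi] at h
  linarith

lemma lob_pi : lob π = 0 := by
  have := lob_periodic 0
  simpa [lob_eq] using this


lemma sin_sq_diff (c u : ℝ) :
    Real.sin (c + u)^2 - Real.sin (c - u)^2 = Real.sin (2*c) * Real.sin (2*u) := by
  rw [Real.sin_add, Real.sin_sub, Real.sin_two_mul, Real.sin_two_mul]
  ring

lemma ell_le_ell {a b : ℝ} (ha : Real.sin a ≠ 0) (h : Real.sin a ^ 2 ≤ Real.sin b ^ 2) :
    ell a ≤ ell b := by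
  have h1 : |Real.sin a| ≤ |Real.sin b| := by
    rw [← Real.sqrt_sq_eq_abs, ← Real.sqrt_sq_eq_abs]
    exact Real.sqrt_le_sqrt h
  have h2 : 0 < |Real.sin a| := abs_pos.2 ha
  rw [ell, ell, abs_mul, abs_mul]
  apply Real.log_le_log (by norm_num; positivity)
  norm_num
  linarith

lemma int_comp_add (c a b : ℝ) : IntervalIntegrable (fun u => ell (c + u)) volume a b := by
  have h := (ell_intable (c + a) (c + b)).comp_add_left c
  rwa [(by ring : c + a - c = a), (by ring : c + b - c = b)] at h

lemma int_comp_sub (c a b : ℝ) : IntervalIntegrable (fun u => ell (c - u)) volume a b := by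
  have h := ((ell_intable (c - b) (c - a)).comp_sub_left c).symm
  rwa [(by ring : c - (c - b) = b), (by ring : c - (c - a) = a)] at h

lemma psi_le_left {c r : ℝ} (hc0 : 0 ≤ c) (hc : c ≤ π/2) (hr0 : 0 ≤ r) (hr : r ≤ π/2) :
    lob (c + r) + lob (c - r) ≤ 2 * lob c := by
  have h1 : lob (c + r) - lob c = -∫ u in (0:ℝ)..r, ell (c + u) := by
    rw [lob_sub, intervalIntegral.integral_comp_add_left ell c, add_zero]
  have h2 : lob (c - r) - lob c = ∫ u in (0:ℝ)..r, ell (c - u) := by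
    rw [lob_sub, intervalIntegral.integral_comp_sub_left ell c, sub_zero,
      intervalIntegral.integral_symm, neg_neg]
  have hmono : ∫ u in (0:ℝ)..r, ell (c - u) ≤ ∫ u in (0:ℝ)..r, ell (c + u) := by
    apply intervalIntegral.integral_mono_ae_restrict hr0 (int_comp_sub c 0 r) (int_comp_add c 0 r)
    filter_upwards [ae_restrict_mem measurableSet_Icc,
      MeasureTheory.ae_restrict_of_ae (ae_ne c)] with u hu hne
    have hsq : Real.sin (c - u) ^ 2 ≤ Real.sin (c + u) ^ 2 := by
      have hd := sin_sq_diff c u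
      have hs1 : 0 ≤ Real.sin (2 * c) :=
        Real.sin_nonneg_of_nonneg_of_le_pi (by linarith) (by linarith)
      have hs2 : 0 ≤ Real.sin (2 * u) :=
        Real.sin_nonneg_of_nonneg_of_le_pi (by linarith [hu.1]) (by linarith [hu.2])
      nlinarith
    have hsne : Real.sin (c - u) ≠ 0 := by
      intro h0
      have hcu1 : -(π/2) ≤ c - u := by linarith [hu.2]
      have hcu2 : c - u ≤ π/2 := by linarith [hu.1]
      have : c - u = 0 := by
        by_contra hne2
        rcases lt_or_gt_of_ne hne2 with hlt | hgt
        · have : Real.sin (c - u) < 0 := by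
            apply Real.sin_neg_of_neg_of_neg_pi_lt hlt
            linarith [Real.pi_pos]
          linarith [this.ne h0]
        · have : 0 < Real.sin (c - u) := by
            apply Real.sin_pos_of_pos_of_lt_pi hgt
            linarith [Real.pi_pos]
          linarith [this.ne' h0]
      exact hne (by linarith)
    exact ell_le_ell hsne hsq
  linarith

lemma psi_le_right {c r : ℝ} (hc0 : π/2 ≤ c) (hc : c ≤ π) (hr0 : 0 ≤ r) (hr : r ≤ π/2) :
    lob (c + r) + lob (c - r) ≤ 2 * lob (c + π/2) := by
  have hper : lob (c - π/2) = lob (c + π/2) := by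
    have := lob_periodic (c - π/2)
    rw [(by ring : c - π/2 + π = c + π/2)] at this
    linarith
  have h1 : lob (c + π/2) - lob (c + r) = -∫ u in r..(π/2), ell (c + u) := by
    rw [lob_sub, intervalIntegral.integral_comp_add_left ell c]
  have h2 : lob (c - π/2) - lob (c - r) = ∫ u in r..(π/2), ell (c - u) := by
    rw [lob_sub, intervalIntegral.integral_comp_sub_left ell c,
      intervalIntegral.integral_symm, neg_neg]
  have hmono : ∫ u in r..(π/2), ell (c + u) ≤ ∫ u in r..(π/2), ell (c - u) := by
    apply intervalIntegral.integral_mono_ae_restrict hr (int_comp_add c r (π/2))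
      (int_comp_sub c r (π/2))
    filter_upwards [ae_restrict_mem measurableSet_Icc,
      MeasureTheory.ae_restrict_of_ae (ae_ne (π - c))] with u hu hne
    have hsq : Real.sin (c + u) ^ 2 ≤ Real.sin (c - u) ^ 2 := by
      have hd := sin_sq_diff c u
      have hs1 : Real.sin (2 * c) ≤ 0 := by
        have h4 := Real.sin_nonneg_of_nonneg_of_le_pi
          (x := 2 * c - π) (by linarith) (by linarith)
        have h5 := Real.sin_add_pi (2 * c - π)
        rw [(by ring : 2 * c - π + π = 2 * c)] at h5
        linarith
      have hs2 : 0 ≤ Real.sin (2 * u) :=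
        Real.sin_nonneg_of_nonneg_of_le_pi (by linarith [hu.1, hr0]) (by linarith [hu.2])
      nlinarith
    have hsne : Real.sin (c + u) ≠ 0 := by
      intro h0
      have hcu1 : π/2 ≤ c + u := by linarith [hu.1]
      have hcu2 : c + u ≤ 3 * π / 2 := by linarith [hu.2]
      have : c + u = π := by
        by_contra hne2
        rcases lt_or_gt_of_ne hne2 with hlt | hgt
        · have : 0 < Real.sin (c + u) := by
            apply Real.sin_pos_of_pos_of_lt_pi (by linarith [Real.pi_pos]) hlt
          linarith [this.ne' h0]
        · have h6 := Real.sin_add_pi (c + u - π)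
          rw [(by ring : c + u - π + π = c + u)] at h6
          have h7 : 0 < Real.sin (c + u - π) :=
            Real.sin_pos_of_pos_of_lt_pi (by linarith) (by linarith [Real.pi_pos])
          rw [h0] at h6
          linarith
      exact hne (by linarith)
    exact ell_le_ell hsne hsq
  linarith

lemma lob_shift (x : ℝ) (k : ℤ) : lob (x + k * π) = lob x :=
  (lob_periodic.int_mul k) x

lemma lob_zero : lob 0 = 0 := by simp [lob]

/-- Pairing lemma -/
lemma pair (x y : ℝ) :
    lob x + lob y ≤ max (2 * lob ((x + y)/2)) (2 * lob ((x + y)/2 + π/2)) := by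
  set c₀ := (x + y) / 2 with hc₀
  set r₀ := (x - y) / 2 with hr₀
  have hx : x = c₀ + r₀ := by rw [hc₀, hr₀]; ring
  have hy : y = c₀ - r₀ := by rw [hc₀, hr₀]; ring
  -- reduce c₀ mod π
  set c := toIcoMod Real.pi_pos 0 c₀ with hc
  obtain ⟨hc0, hc1⟩ := toIcoMod_mem_Ico' Real.pi_pos c₀
  have hkc : ∃ k : ℤ, c₀ = c + k * π := by
    refine ⟨toIcoDiv Real.pi_pos 0 c₀, ?_⟩
    have := toIcoMod_add_toIcoDiv_zsmul Real.pi_pos 0 c₀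
    rw [zsmul_eq_mul] at this
    linarith
  obtain ⟨k, hk⟩ := hkc
  have e1 : lob x = lob (c + r₀) := by
    rw [hx, hk, (by ring : c + k * π + r₀ = (c + r₀) + k * π), lob_shift]
  have e2 : lob y = lob (c - r₀) := by
    rw [hy, hk, (by ring : c + k * π - r₀ = (c - r₀) + k * π), lob_shift]
  have e3 : lob c₀ = lob c := by rw [hk, lob_shift]
  have e4 : lob (c₀ + π/2) = lob (c + π/2) := by
    rw [hk, (by ring : c + k * π + π/2 = (c + π/2) + k * π), lob_shift]
  rw [e1, e2, e3, e4]
  -- reduce r₀ mod π to [-π/2, π/2)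
  set r₁ := toIcoMod Real.pi_pos (-(π/2)) r₀ with hr₁
  obtain ⟨hr10, hr11⟩ := toIcoMod_mem_Ico Real.pi_pos (-(π/2)) r₀
  rw [(by ring : -(π/2) + π = π/2)] at hr11
  have hkr : ∃ m : ℤ, r₀ = r₁ + m * π := by
    refine ⟨toIcoDiv Real.pi_pos (-(π/2)) r₀, ?_⟩
    have := toIcoMod_add_toIcoDiv_zsmul Real.pi_pos (-(π/2)) r₀
    rw [zsmul_eq_mul] at this
    linarith
  obtain ⟨m, hm⟩ := hkr
  have f1 : lob (c + r₀) = lob (c + r₁) := by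
    rw [hm, (by ring : c + (r₁ + m * π) = (c + r₁) + m * π), lob_shift]
  have f2 : lob (c - r₀) = lob (c - r₁) := by
    rw [hm, (by push_cast; ring : c - (r₁ + (m:ℝ) * π) = (c - r₁) + ((-m : ℤ) : ℝ) * π),
      lob_shift]
  rw [f1, f2]
  -- symmetrize r
  have key : ∀ r : ℝ, 0 ≤ r → r ≤ π/2 →
      lob (c + r) + lob (c - r) ≤ max (2 * lob c) (2 * lob (c + π/2)) := by
    intro r h0 h1
    rcases le_or_gt c (π/2) with hcle | hcgt
    · exact le_trans (psi_le_left hc0 hcle h0 h1) (le_max_left _ _)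
    · exact le_trans (psi_le_right hcgt.le hc1.le h0 h1) (le_max_right _ _)
  rcases le_or_gt 0 r₁ with h0 | h0
  · exact key r₁ h0 (by linarith)
  · have := key (-r₁) (by linarith) (by linarith)
    rw [(by ring : c + -r₁ = c - r₁), (by ring : c - -r₁ = c + r₁)] at this
    linarith

/-- the step function h -/
noncomputable def hdiff (t : ℝ) : ℝ := lob t - lob (t + π/2)

lemma hdiff_eq (t : ℝ) : hdiff t = ∫ u in (0:ℝ)..t, (ell (π/2 + u) - ell u) := by
  have h1 : lob t - lob 0 = -∫ u in (0:ℝ)..t, ell u := by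
    rw [lob_sub]
  have h2 : lob (t + π/2) - lob (π/2) = -∫ u in (0:ℝ)..t, ell (π/2 + u) := by
    rw [lob_sub, intervalIntegral.integral_comp_add_left ell (π/2), add_zero,
      (by ring : π/2 + t = t + π/2)]
  have h3 : ∫ u in (0:ℝ)..t, (ell (π/2 + u) - ell u) =
      (∫ u in (0:ℝ)..t, ell (π/2 + u)) - ∫ u in (0:ℝ)..t, ell u := by
    exact intervalIntegral.integral_sub (int_comp_add (π/2) 0 t)
      (by simpa using int_comp_add 0 0 t)
  rw [hdiff, h3]
  rw [lob_zero] at h1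
  rw [lob_pi_half] at h2
  linarith

lemma hdiff_mono {t₁ t₂ : ℝ} (h0 : 0 ≤ t₁) (h12 : t₁ ≤ t₂) (h2 : t₂ ≤ π/4) :
    hdiff t₁ ≤ hdiff t₂ := by
  rw [hdiff_eq, hdiff_eq,
    ← intervalIntegral.integral_add_adjacent_intervals
      (a := (0:ℝ)) (b := t₁) (c := t₂)
      ((int_comp_add (π/2) 0 t₁).sub (by simpa using int_comp_add 0 0 t₁))
      ((int_comp_add (π/2) t₁ t₂).sub (by simpa using int_comp_add 0 t₁ t₂))]
  have : 0 ≤ ∫ u in t₁..t₂, (ell (π/2 + u) - ell u) := by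
    apply intervalIntegral.integral_nonneg_of_ae_restrict h12
    filter_upwards [ae_restrict_mem measurableSet_Icc,
      MeasureTheory.ae_restrict_of_ae (ae_ne (0:ℝ))] with u hu hne
    have hu0 : 0 < u := lt_of_le_of_ne (le_trans h0 hu.1) (Ne.symm hne)
    have hu4 : u ≤ π/4 := le_trans hu.2 h2
    have hsp : 0 < Real.sin u :=
      Real.sin_pos_of_pos_of_lt_pi hu0 (by linarith [Real.pi_pos])
    have hsne : Real.sin u ≠ 0 := hsp.ne'
    have hsq : Real.sin u ^ 2 ≤ Real.sin (π/2 + u) ^ 2 := by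
      rw [(by ring : π/2 + u = u + π/2), Real.sin_add_pi_div_two]
      have hsu : 0 ≤ Real.sin u := hsp.le
      have hcu : Real.sin u ≤ Real.cos u := by
        rw [← Real.cos_pi_div_two_sub]
        apply Real.cos_le_cos_of_nonneg_of_le_pi (by linarith [Real.pi_pos]) (by linarith [Real.pi_pos])
        linarith
      nlinarith
    have := ell_le_ell hsne hsq
    simp only [Pi.zero_apply]
    linarith
  linarith

lemma hdiff_neg_shift (t : ℝ) : hdiff (t + π/2) = -hdiff t := by
  rw [hdiff, hdiff, (by ring : t + π/2 + π/2 = t + π)]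
  rw [lob_periodic t]
  ring

lemma hdiff_odd (t : ℝ) : hdiff (-t) = -hdiff t := by
  rw [hdiff, hdiff, lob_odd, (by ring : -t + π/2 = -(t - π/2)), lob_odd]
  have : lob (t - π/2) = lob (t + π/2) := by
    have := lob_periodic (t - π/2)
    rw [(by ring : t - π/2 + π = t + π/2)] at this
    linarith
  rw [this]
  ring

lemma hdiff_bound (t : ℝ) : |hdiff t| ≤ 2 * lob (π/4) := by
  have hq : hdiff (π/4) = 2 * lob (π/4) := by
    rw [hdiff, (by ring : π/4 + π/2 = -(π/4) + π), lob_periodic, lob_odd]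
    ring
  have hseg : ∀ s, 0 ≤ s → s ≤ π/4 → |hdiff s| ≤ 2 * lob (π/4) := by
    intro s h0 h1
    have hl : 0 ≤ hdiff s := by
      have := hdiff_mono (le_refl 0) h0 h1
      rw [hdiff_eq 0] at this
      simpa using this
    have hu : hdiff s ≤ 2 * lob (π/4) := by
      rw [← hq]
      exact hdiff_mono h0 h1 (le_refl _)
    rw [abs_of_nonneg hl]
    exact hu
  -- reduce t mod π/2 to [-π/4, π/4)
  have hper : Function.Periodic (fun t => |hdiff t|) (π/2) := by
    intro s
    simp only [hdiff_neg_shift, abs_neg]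
  set t₁ := toIcoMod (by positivity : (0:ℝ) < π/2) (-(π/4)) t with ht₁
  obtain ⟨h10, h11⟩ := toIcoMod_mem_Ico (by positivity : (0:ℝ) < π/2) (-(π/4)) t
  rw [(by ring : -(π/4) + π/2 = π/4)] at h11
  have hmm : ∃ m : ℤ, t = t₁ + m * (π/2) := by
    refine ⟨toIcoDiv (by positivity : (0:ℝ) < π/2) (-(π/4)) t, ?_⟩
    have := toIcoMod_add_toIcoDiv_zsmul (by positivity : (0:ℝ) < π/2) (-(π/4)) t
    rw [zsmul_eq_mul] at this
    linarith
  obtain ⟨m, hm⟩ := hmm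
  have : |hdiff t| = |hdiff t₁| := by
    rw [hm]
    exact (hper.int_mul m) t₁
  rw [this]
  rcases le_or_gt 0 t₁ with h0 | h0
  · exact hseg t₁ h0 h11.le
  · rw [← abs_neg, ← hdiff_odd]
    exact hseg (-t₁) (by linarith) (by linarith)

end LobAux

open LobAux in
theorem stmt_14 (α β γ : ℝ) :
    (1 / 2) * (lob (α + β + γ) - lob (β + γ - α) - lob (α + γ - β) - lob (α + β - γ))
      ≤ (8 * lob (Real.pi / 4)) / 4 := by
  set A := 2 * lob γ with hA
  set B := 2 * lob (γ + π/2) with hB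
  have h1 : lob (α + β + γ) + lob (-(α + β - γ)) ≤ max A B := by
    have := pair (α + β + γ) (-(α + β - γ))
    rw [(by ring : (α + β + γ + -(α + β - γ))/2 = γ)] at this
    exact this
  have h2 : lob (-(β + γ - α)) + lob (-(α + γ - β)) ≤ max (-A) (-B) := by
    have := pair (-(β + γ - α)) (-(α + γ - β))
    rw [(by ring : (-(β + γ - α) + -(α + γ - β))/2 = -γ)] at this
    have e1 : lob (-γ) = -lob γ := lob_odd γ
    have e2 : lob (-γ + π/2) = -lob (γ + π/2) := by
      rw [(by ring : -γ + π/2 = -(γ - π/2)), lob_odd]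
      have := lob_periodic (γ - π/2)
      rw [(by ring : γ - π/2 + π = γ + π/2)] at this
      rw [this]
    rw [e1, e2] at this
    have : lob (-(β + γ - α)) + lob (-(α + γ - β)) ≤ max (2 * -lob γ) (2 * -lob (γ + π/2)) := this
    calc lob (-(β + γ - α)) + lob (-(α + γ - β)) ≤ max (2 * -lob γ) (2 * -lob (γ + π/2)) := this
      _ = max (-A) (-B) := by rw [hA, hB]; congr 1 <;> ring
  have hAB : max A B + max (-A) (-B) = |A - B| := by
    rcases le_total A B with h | h
    · rw [max_eq_right h, max_eq_left (by linarith), abs_of_nonpos (by linarith)]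
      ring
    · rw [max_eq_left h, max_eq_right (by linarith), abs_of_nonneg (by linarith)]
      ring
  have hABle : |A - B| ≤ 4 * lob (π/4) := by
    have := hdiff_bound γ
    rw [hdiff] at this
    rw [hA, hB]
    rw [(by ring : 2 * lob γ - 2 * lob (γ + π/2) = 2 * (lob γ - lob (γ + π/2))), abs_mul]
    rw [abs_of_nonneg (by norm_num : (0:ℝ) ≤ (2:ℝ))]
    linarith
  have ho1 : lob (-(α + β - γ)) = -lob (α + β - γ) := lob_odd _
  have ho2 : lob (-(β + γ - α)) = -lob (β + γ - α) := lob_odd _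
  have ho3 : lob (-(α + γ - β)) = -lob (α + γ - β) := lob_odd _
  rw [ho1] at h1
  rw [ho2, ho3] at h2
  have hmax := hAB ▸ (add_le_add h1 h2)
  linarith
end
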